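/- arXiv:2506.05194 — 6 statements merged into one kernel-verified Lean document; each statement's English description precedes it below -/
import Mathlib

section
/- Let G be a finite d-regular simple graph on N vertices, let k ≥ 2 be an integer, and let m : V(G) → ℕ be a function with k·∑_{v ∈ V(G)} m(v) = N·d/2. Then G has a k-star decomposition with exactly m(v) stars centered at each vertex v if and only if for every subset U ⊆ V(G) the number e[U] of edges of G with both endpoints in U satisfies e[U] ≤ k·∑_{v ∈ U} m(v). -/
lemma range_filter_div (k M j : ℕ) (hk : 0 < k) (hj : j < M) :
    ((Finset.range (k * M)).filter (fun i => i / k = j)).card = k := by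
  have : (Finset.range (k * M)).filter (fun i => i / k = j)
      = (Finset.range k).image (fun r => k * j + r) := by
    ext i
    simp only [Finset.mem_filter, Finset.mem_range, Finset.mem_image]
    constructor
    · rintro ⟨hi, hij⟩
      have hmod := Nat.mod_lt i hk
      have hdm := Nat.div_add_mod i k
      rw [hij] at hdm
      exact ⟨i % k, hmod, hdm⟩
    · rintro ⟨r, hr, rfl⟩
      have h1 : (k * j + r) / k = j := by
        rw [Nat.mul_add_div hk, Nat.div_eq_of_lt hr, Nat.add_zero]
      have h2 : k * (j + 1) ≤ k * M := Nat.mul_le_mul_left _ hj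
      have h3 : k * (j + 1) = k * j + k := by ring
      exact ⟨by omega, h1⟩
  rw [this, Finset.card_image_of_injective _ (fun a b h => by omega), Finset.card_range]

/-- A graph is `d`-regular: every vertex has exactly `d` neighbors. -/
def IsRegularGraph {V : Type*} (G : SimpleGraph V) (d : ℕ) : Prop :=
  ∀ v, (G.neighborSet v).ncard = d

/-- `G` has a decomposition of its edge set into `k`-stars with exactly `m v`
stars centered at each vertex `v`.  A star is recorded as a pair `(center, edges)`. -/
def HasStarDecomp {V : Type*} [DecidableEq V] (G : SimpleGraph V) (k : ℕ)
    (m : V → ℕ) : Prop :=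
  ∃ S : Finset (V × Finset (Sym2 V)),
    (∀ p ∈ S, p.2.card = k ∧ (↑p.2 : Set (Sym2 V)) ⊆ G.edgeSet ∧ ∀ e ∈ p.2, p.1 ∈ e) ∧
    (∀ e ∈ G.edgeSet, ∃! p, p ∈ S ∧ e ∈ p.2) ∧
    (∀ v, (S.filter fun p => p.1 = v).card = m v)

theorem stmt_4 {V : Type*} [Fintype V] [DecidableEq V] (d k : ℕ) (hk : 2 ≤ k)
    (G : SimpleGraph V) (hreg : IsRegularGraph G d) (m : V → ℕ)
    (hm : 2 * (k * ∑ v, m v) = Fintype.card V * d) :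
    HasStarDecomp G k m ↔
      ∀ U : Finset V, {e ∈ G.edgeSet | ∀ v ∈ e, v ∈ U}.ncard ≤ k * ∑ v ∈ U, m v := by
  classical
  have hk0 : 0 < k := by omega
  -- the set of edges inside U as a Finset
  have hset : ∀ U : Finset V,
      {e ∈ G.edgeSet | ∀ v ∈ e, v ∈ U} =
        ↑(G.edgeFinset.filter (fun e => ∀ v ∈ e, v ∈ U)) := by
    intro U
    ext e
    simp [SimpleGraph.mem_edgeFinset, Set.mem_setOf_eq]
  constructor
  · rintro ⟨S, hS1, hS2, hS3⟩ U
    rw [hset, Set.ncard_coe_finset]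
    set T := G.edgeFinset.filter (fun e => ∀ v ∈ e, v ∈ U) with hT
    set S' := S.filter (fun p => p.1 ∈ U) with hS'
    have hsub : T ⊆ S'.biUnion (fun p => p.2) := by
      intro e he
      rw [hT, Finset.mem_filter, SimpleGraph.mem_edgeFinset] at he
      obtain ⟨p, ⟨hpS, hpe⟩, -⟩ := hS2 e he.1
      have hpv : p.1 ∈ e := (hS1 p hpS).2.2 e hpe
      rw [Finset.mem_biUnion]
      exact ⟨p, Finset.mem_filter.2 ⟨hpS, he.2 p.1 hpv⟩, hpe⟩
    have hcard : S'.card = ∑ v ∈ U, m v := by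
      have : S' = U.biUnion (fun v => S.filter (fun p => p.1 = v)) := by
        ext p
        simp only [hS', Finset.mem_filter, Finset.mem_biUnion]
        constructor
        · rintro ⟨hp, hu⟩; exact ⟨p.1, hu, hp, rfl⟩
        · rintro ⟨v, hv, hp, rfl⟩; exact ⟨hp, hv⟩
      rw [this, Finset.card_biUnion]
      · exact Finset.sum_congr rfl fun v _ => hS3 v
      · intro a _ b _ hab
        simp only [Finset.disjoint_left, Finset.mem_filter]
        rintro p ⟨-, rfl⟩ ⟨-, h⟩
        exact hab h
    calc T.card ≤ (S'.biUnion (fun p => p.2)).card := Finset.card_le_card hsub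
      _ ≤ ∑ p ∈ S', p.2.card := Finset.card_biUnion_le
      _ = ∑ p ∈ S', k :=
          Finset.sum_congr rfl fun p hp => (hS1 p (Finset.filter_subset _ _ hp)).1
      _ = k * S'.card := by rw [Finset.sum_const, smul_eq_mul, mul_comm]
      _ = k * ∑ v ∈ U, m v := by rw [hcard]
  · intro hU
    classical
    have hk0 : 0 < k := by omega
    have hset : ∀ U : Finset V,
        {e ∈ G.edgeSet | ∀ v ∈ e, v ∈ U} =
          ↑(G.edgeFinset.filter (fun e => ∀ v ∈ e, v ∈ U)) := by
      intro U
      ext e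
      simp [SimpleGraph.mem_edgeFinset, Set.mem_setOf_eq]
    -- degree and edge count
    have hdeg : ∀ v, G.degree v = d := by
      intro v
      have h := hreg v
      rw [Set.ncard_eq_toFinset_card'] at h
      rw [SimpleGraph.degree, SimpleGraph.neighborFinset_def]
      convert h using 2
    have hE : G.edgeFinset.card = k * ∑ v, m v := by
      have h2 := G.sum_degrees_eq_twice_card_edges
      simp only [hdeg, Finset.sum_const, Finset.card_univ, smul_eq_mul] at h2
      omega
    -- Hall setup
    let ι := {e : Sym2 V // e ∈ G.edgeFinset}
    let vss : ι → Finset V := fun e => Finset.univ.filter (fun v => v ∈ e.val)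
    let slots : V → Finset (V × ℕ) := fun v => (Finset.range (k * m v)).image (fun i => (v, i))
    let t : ι → Finset (V × ℕ) := fun e => (vss e).biUnion slots
    have hvss : ∀ (e : ι) (v : V), v ∈ vss e ↔ v ∈ e.val := by
      intro e v; simp [vss]
    have hslots_card : ∀ v, (slots v).card = k * m v := by
      intro v
      rw [Finset.card_image_of_injective _ (fun a b h => by simpa using h), Finset.card_range]
    have hslots_mem : ∀ v p, p ∈ slots v ↔ p.1 = v ∧ p.2 < k * m v := by
      intro v p
      simp only [slots, Finset.mem_image, Finset.mem_range]
      constructor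
      · rintro ⟨i, hi, rfl⟩; exact ⟨rfl, hi⟩
      · rintro ⟨h1, h2⟩; exact ⟨p.2, h2, by rw [← h1]⟩
    have hall : ∀ s : Finset ι, s.card ≤ (s.biUnion t).card := by
      intro s
      set U := s.biUnion vss with hUdef
      have h1 : s.biUnion t = U.biUnion slots := by
        ext p
        simp only [Finset.mem_biUnion, t, hUdef]
        constructor
        · rintro ⟨e, he, hp⟩
          obtain ⟨v, hv, hp⟩ := hp
          exact ⟨v, ⟨e, he, hv⟩, hp⟩
        · rintro ⟨v, hv, hp⟩
          obtain ⟨e, he, hv⟩ := hv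
          exact ⟨e, he, v, hv, hp⟩
      have hdisj : ∀ a ∈ U, ∀ b ∈ U, a ≠ b → Disjoint (slots a) (slots b) := by
        intro a _ b _ hab
        simp only [Finset.disjoint_left]
        intro p hpa hpb
        rw [hslots_mem] at hpa hpb
        exact hab (hpa.1.symm.trans hpb.1)
      have hcardU : (U.biUnion slots).card = ∑ v ∈ U, k * m v := by
        rw [Finset.card_biUnion hdisj]
        exact Finset.sum_congr rfl fun v _ => hslots_card v
      have hmap : s.card ≤ (G.edgeFinset.filter (fun e => ∀ v ∈ e, v ∈ U)).card := by
        have hsub : s.image Subtype.val ⊆ G.edgeFinset.filter (fun e => ∀ v ∈ e, v ∈ U) := by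
          intro e he
          simp only [Finset.mem_image] at he
          obtain ⟨x, hx, rfl⟩ := he
          refine Finset.mem_filter.2 ⟨x.2, fun v hv => ?_⟩
          exact Finset.mem_biUnion.2 ⟨x, hx, (hvss x v).2 hv⟩
        calc s.card = (s.image Subtype.val).card :=
              (Finset.card_image_of_injective _ Subtype.val_injective).symm
          _ ≤ _ := Finset.card_le_card hsub
      have hUb := hU U
      rw [hset U, Set.ncard_coe_finset] at hUb
      calc s.card ≤ _ := hmap
        _ ≤ k * ∑ v ∈ U, m v := hUb
        _ = ∑ v ∈ U, k * m v := Finset.mul_sum _ _ _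
        _ = (U.biUnion slots).card := hcardU.symm
        _ = (s.biUnion t).card := by rw [h1]
    obtain ⟨f, hfinj, hft⟩ := (Finset.all_card_le_biUnion_card_iff_exists_injective t).mp hall
    have hf : ∀ e : ι, (f e).1 ∈ e.val ∧ (f e).2 < k * m (f e).1 := by
      intro e
      have h := hft e
      simp only [t, Finset.mem_biUnion] at h
      obtain ⟨v, hv, hp⟩ := h
      rw [hslots_mem] at hp
      rw [hvss] at hv
      rw [hp.1]
      exact ⟨hv, hp.2⟩
    -- fibers
    let F : V → Finset ι := fun v => Finset.univ.filter (fun e => (f e).1 = v)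
    have hFmem : ∀ v (e : ι), e ∈ F v ↔ (f e).1 = v := by
      intro v e; simp [F]
    have hinj : ∀ v, Set.InjOn (fun e => (f e).2) (F v) := by
      intro v a ha b hb hab
      rw [Finset.mem_coe, hFmem] at ha hb
      apply hfinj
      exact Prod.ext (ha.trans hb.symm) hab
    have hFsub : ∀ v, (F v).image (fun e => (f e).2) ⊆ Finset.range (k * m v) := by
      intro v i hi
      simp only [Finset.mem_image] at hi
      obtain ⟨e, he, rfl⟩ := hi
      have h2 := (hf e).2
      rw [hFmem] at he
      rw [he] at h2
      exact Finset.mem_range.2 h2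
    have hFle : ∀ v, (F v).card ≤ k * m v := by
      intro v
      calc (F v).card = ((F v).image (fun e => (f e).2)).card :=
            (Finset.card_image_of_injOn (hinj v)).symm
        _ ≤ (Finset.range (k * m v)).card := Finset.card_le_card (hFsub v)
        _ = k * m v := Finset.card_range _
    have hsum : ∑ v, (F v).card = ∑ v, k * m v := by
      have h1 : (Finset.univ : Finset ι).card = ∑ v : V, (F v).card :=
        Finset.card_eq_sum_card_fiberwise (fun x _ => Finset.mem_univ ((f x).1))
      have h2 : (Finset.univ : Finset ι).card = G.edgeFinset.card := by
        rw [Finset.card_univ]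
        exact Fintype.card_coe _
      rw [← h1, h2, hE, ← Finset.mul_sum]
    have hfib : ∀ v, (F v).card = k * m v := by
      have h := (Finset.sum_eq_sum_iff_of_le (fun v (_ : v ∈ Finset.univ) => hFle v)).mp hsum
      exact fun v => h v (Finset.mem_univ v)
    have himg : ∀ v, (F v).image (fun e => (f e).2) = Finset.range (k * m v) := by
      intro v
      apply Finset.eq_of_subset_of_card_le (hFsub v)
      rw [Finset.card_range, Finset.card_image_of_injOn (hinj v), hfib]
    -- stars
    let star : V → ℕ → Finset (Sym2 V) := fun v j =>
      ((F v).filter (fun e => (f e).2 / k = j)).image Subtype.val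
    have hstar_mem : ∀ v j (x : ι), x.val ∈ star v j ↔ ((f x).1 = v ∧ (f x).2 / k = j) := by
      intro v j x
      simp only [star, Finset.mem_image, Finset.mem_filter]
      constructor
      · rintro ⟨y, ⟨hy1, hy2⟩, hyx⟩
        have hyx' : y = x := Subtype.ext hyx
        subst hyx'
        rw [hFmem] at hy1
        exact ⟨hy1, hy2⟩
      · rintro ⟨h1, h2⟩
        exact ⟨x, ⟨(hFmem v x).2 h1, h2⟩, rfl⟩
    have hstar_sub : ∀ v j e, e ∈ star v j →
        ∃ x : ι, x.val = e ∧ (f x).1 = v ∧ (f x).2 / k = j := by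
      intro v j e he
      simp only [star, Finset.mem_image, Finset.mem_filter] at he
      obtain ⟨x, ⟨hx1, hx2⟩, rfl⟩ := he
      rw [hFmem] at hx1
      exact ⟨x, rfl, hx1, hx2⟩
    have hstar_card : ∀ v, ∀ j < m v, (star v j).card = k := by
      intro v j hj
      have h1 : ((F v).image (fun e => (f e).2)).filter (fun i => i / k = j)
          = ((F v).filter (fun e => (f e).2 / k = j)).image (fun e => (f e).2) :=
        Finset.filter_image
      rw [himg v] at h1
      have hmono : Set.InjOn (fun e => (f e).2)
          ((F v).filter (fun e => (f e).2 / k = j)) :=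
        (hinj v).mono (Finset.coe_subset.mpr (Finset.filter_subset _ _))
      calc (star v j).card
          = ((F v).filter (fun e => (f e).2 / k = j)).card :=
            Finset.card_image_of_injective _ Subtype.val_injective
        _ = (((F v).filter (fun e => (f e).2 / k = j)).image (fun e => (f e).2)).card :=
            (Finset.card_image_of_injOn hmono).symm
        _ = ((Finset.range (k * m v)).filter (fun i => i / k = j)).card := by rw [← h1]
        _ = k := range_filter_div k (m v) j hk0 hj
    -- assemble the decomposition
    refine ⟨Finset.univ.biUnion (fun v => (Finset.range (m v)).image (fun j => (v, star v j))),
      ?_, ?_, ?_⟩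
    · intro p hp
      simp only [Finset.mem_biUnion, Finset.mem_univ, true_and, Finset.mem_image,
        Finset.mem_range] at hp
      obtain ⟨v, j, hj, rfl⟩ := hp
      refine ⟨hstar_card v j hj, ?_, ?_⟩
      · intro e he
        rw [Finset.mem_coe] at he
        obtain ⟨x, rfl, -, -⟩ := hstar_sub v j e he
        exact SimpleGraph.mem_edgeFinset.1 x.2
      · intro e he
        obtain ⟨x, rfl, h1, -⟩ := hstar_sub v j e he
        have := (hf x).1
        rw [h1] at this
        exact this
    · intro e he
      have heF : e ∈ G.edgeFinset := SimpleGraph.mem_edgeFinset.2 he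
      set x : ι := ⟨e, heF⟩ with hx
      have hjlt : (f x).2 / k < m (f x).1 := Nat.div_lt_of_lt_mul (hf x).2
      refine ⟨((f x).1, star (f x).1 ((f x).2 / k)), ⟨?_, ?_⟩, ?_⟩
      · simp only [Finset.mem_biUnion, Finset.mem_univ, true_and, Finset.mem_image,
          Finset.mem_range]
        exact ⟨(f x).1, (f x).2 / k, hjlt, rfl⟩
      · exact (hstar_mem _ _ x).2 ⟨rfl, rfl⟩
      · rintro q ⟨hqS, hqe⟩
        simp only [Finset.mem_biUnion, Finset.mem_univ, true_and, Finset.mem_image,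
          Finset.mem_range] at hqS
        obtain ⟨v, j, hj, rfl⟩ := hqS
        obtain ⟨h1, h2⟩ := (hstar_mem v j x).1 hqe
        rw [← h1, ← h2]
    · intro v
      have hfilter : ((Finset.univ.biUnion
            (fun v => (Finset.range (m v)).image (fun j => (v, star v j)))).filter
            (fun p => p.1 = v))
          = (Finset.range (m v)).image (fun j => (v, star v j)) := by
        ext p
        simp only [Finset.mem_filter, Finset.mem_biUnion, Finset.mem_univ, true_and,
          Finset.mem_image, Finset.mem_range]
        constructor
        · rintro ⟨⟨w, j, hj, rfl⟩, hv⟩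
          simp only at hv
          subst hv
          exact ⟨j, hj, rfl⟩
        · rintro ⟨j, hj, rfl⟩
          exact ⟨⟨v, j, hj, rfl⟩, rfl⟩
      rw [hfilter, Finset.card_image_of_injOn, Finset.card_range]
      intro j1 hj1 j2 hj2 heq
      rw [Finset.mem_coe, Finset.mem_range] at hj1 hj2
      have hst : star v j1 = star v j2 := congrArg Prod.snd heq
      have hne : (star v j1).Nonempty :=
        Finset.card_pos.1 (by rw [hstar_card v j1 hj1]; omega)
      obtain ⟨e, heS⟩ := hne
      obtain ⟨x, rfl, h1, h2⟩ := hstar_sub v j1 e heS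
      have hb := (hstar_mem v j2 x).1 (hst ▸ heS)
      exact h2.symm.trans hb.2
end

section
/- There exists an absolute constant C such that the following holds for all positive integers N, d, M with M ≤ N and N·d even. Let U ⊆ {1,…,N} with |U| = M, and let E be a nonnegative integer with 2E ≤ M·d and N·d − 2M·d + 2E ≥ 0. Then the number of perfect matchings of the set {1,…,N}×{1,…,d} having exactly E matched pairs both of whose elements have first coordinate in U is at most (N·d+1)^C · exp(N·d·F(M/N, 2E/(M·d))) times the total number of perfect matchings of {1,…,N}×{1,…,d}. -/
/-- `P` is a perfect matching of `α`: a set of non-diagonal unordered pairs such that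
every element of `α` belongs to exactly one pair. -/
def IsPerfectMatching {α : Type*} (P : Set (Sym2 α)) : Prop :=
  (∀ e ∈ P, ¬ e.IsDiag) ∧ ∀ x : α, ∃! e, e ∈ P ∧ x ∈ e

/-- The number of pairs of the matching `P` both of whose elements have first
coordinate in `U`. -/
noncomputable def pairsIn {α β : Type*} (P : Set (Sym2 (α × β))) (U : Set α) : ℕ :=
  {e ∈ P | ∀ x ∈ e, x.1 ∈ U}.ncard

/-- `h x = -x log x` (with `h 0 = 0`, since `Real.log 0 = 0`). -/
noncomputable def entH (x : ℝ) : ℝ := -x * Real.log x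

/-- `H x = h x + h (1 - x)`. -/
noncomputable def entHH (x : ℝ) : ℝ := entH x + entH (1 - x)

/-- The rate function `F(x,t)`. -/
noncomputable def entF (x t : ℝ) : ℝ :=
  (1 / 2) * entH (t * x) + entH ((1 - t) * x) + (1 / 2) * entH (1 - (2 - t) * x) - entHH x

/-!
Let `S` be the set of the `a = Md` points whose first coordinate lies in `U`, let `b = Nd - a`,
`n = Nd / 2`, `m = a - 2E` and `k = n + E - a`. A perfect matching with `E` pairs inside `S` has
`k` pairs inside `Sᶜ`, and it is determined by these two partial matchings together with the
bijection that it induces between the `m` remaining points of `S` and the `m` remaining points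
of `Sᶜ`. Since a set of size `s` carries `s! / ((s - 2j)! j! 2^j)` partial matchings with `j`
pairs, the number of such perfect matchings is at most `a! b! / (E! 2^E k! 2^k m!)`, while the
total number is at least `(2n)! / (n! 2^n)`. Replacing every factorial `u!` by Stirling's main
term `u^u e^(-u)` loses at most a factor `(2n+1)^2` for each factorial of the numerator, and the
resulting ratio of main terms is exactly `exp (Nd F(M/N, 2E/(Md)))`.
-/

open Function Set
open scoped Nat

theorem Nat.card_le_card_mul_of_card_fiber_le {X Y : Type*} [Finite X] [Finite Y] (f : X → Y)
    {c : ℕ} (h : ∀ y, Nat.card {x // f x = y} ≤ c) : Nat.card X ≤ Nat.card Y * c := by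
  have := Fintype.ofFinite Y
  rw [← Nat.card_congr (Equiv.sigmaFiberEquiv f), Nat.card_sigma, Nat.card_eq_fintype_card,
    ← smul_eq_mul, ← Finset.card_univ]
  exact Finset.sum_le_card_nsmul _ _ _ fun y _ => h y

theorem Nat.card_eq_card_mul_of_card_fiber_eq {X Y : Type*} [Finite X] [Finite Y] (f : X → Y)
    {c : ℕ} (h : ∀ y, Nat.card {x // f x = y} = c) : Nat.card X = Nat.card Y * c := by
  have := Fintype.ofFinite Y
  rw [← Nat.card_congr (Equiv.sigmaFiberEquiv f), Nat.card_sigma, Nat.card_eq_fintype_card,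
    ← smul_eq_mul, ← Finset.card_univ, ← Finset.sum_const]
  exact Finset.sum_congr rfl fun y _ => h y

theorem Nat.card_embedding_eq {X Y : Type*} [Finite X] [Finite Y] :
    Nat.card (X ↪ Y) = (Nat.card Y).descFactorial (Nat.card X) := by
  have := Fintype.ofFinite X
  have := Fintype.ofFinite Y
  classical
  simp only [Nat.card_eq_fintype_card, Fintype.card_embedding_eq]

variable {α : Type*}

namespace Sym2

/-- The two elements of `q`, ordered by the representative `Quot.out q`. -/
noncomputable def endpoint (q : Sym2 α) (t : Fin 2) : α := ![q.out.1, q.out.2] t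

theorem endpoint_mem (q : Sym2 α) (t : Fin 2) : q.endpoint t ∈ q := by
  fin_cases t
  exacts [q.out_fst_mem, q.out_snd_mem]

theorem mk_endpoint_endpoint_add_one (q : Sym2 α) (t : Fin 2) :
    s(q.endpoint t, q.endpoint (t + 1)) = q := by
  have h : s(q.out.1, q.out.2) = q := q.out_eq
  fin_cases t
  · exact h
  · exact (Sym2.eq_swap).trans h

theorem endpoint_injective {q : Sym2 α} (hq : ¬ q.IsDiag) : Injective q.endpoint := by
  have h : q.out.1 ≠ q.out.2 := fun h' => hq (by
    rw [← mk_endpoint_endpoint_add_one q 0]; exact h')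
  intro t t' htt
  fin_cases t <;> fin_cases t'
  all_goals first | rfl | exact absurd htt h | exact absurd htt.symm h

theorem exists_endpoint_eq {q : Sym2 α} {x : α} (hx : x ∈ q) : ∃ t, q.endpoint t = x := by
  rw [← mk_endpoint_endpoint_add_one q 0, Sym2.mem_iff] at hx
  rcases hx with rfl | rfl
  exacts [⟨0, rfl⟩, ⟨1, rfl⟩]

end Sym2

structure IsPartialMatching (Q : Set (Sym2 α)) (T : Set α) : Prop where
  not_isDiag : ∀ e ∈ Q, ¬ e.IsDiag
  mem : ∀ e ∈ Q, ∀ x ∈ e, x ∈ T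
  eq_of_mem : ∀ e ∈ Q, ∀ f ∈ Q, ∀ x ∈ e, x ∈ f → e = f

def verts (Q : Set (Sym2 α)) : Set α := {x | ∃ e ∈ Q, x ∈ e}

def pairsWithin (Q : Set (Sym2 α)) (A : Set α) : Set (Sym2 α) := {e ∈ Q | ∀ x ∈ e, x ∈ A}

def pairsOf {m : ℕ} (g : Fin m × Fin 2 → α) : Set (Sym2 α) :=
  range fun i => s(g (i, 0), g (i, 1))

theorem verts_pairsOf {m : ℕ} (g : Fin m × Fin 2 → α) : verts (pairsOf g) = range g := by
  ext x
  simp only [verts, pairsOf, mem_range, exists_exists_eq_and, Sym2.mem_iff]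
  constructor
  · rintro ⟨i, rfl | rfl⟩
    exacts [⟨(i, 0), rfl⟩, ⟨(i, 1), rfl⟩]
  · rintro ⟨⟨i, t⟩, rfl⟩
    fin_cases t
    exacts [⟨i, Or.inl rfl⟩, ⟨i, Or.inr rfl⟩]

theorem pairsOf_injective {m : ℕ} {g : Fin m × Fin 2 → α} (hg : Injective g) :
    Injective fun i => s(g (i, 0), g (i, 1)) := by
  intro i j hij
  have hij : s(g (i, 0), g (i, 1)) = s(g (j, 0), g (j, 1)) := hij
  rcases Sym2.mem_iff.mp (hij ▸ Sym2.mem_mk_left _ _) with h | h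
  exacts [congrArg Prod.fst (hg h), congrArg Prod.fst (hg h)]

theorem isPartialMatching_pairsOf {m : ℕ} {T : Set α} {g : Fin m × Fin 2 → α}
    (hg : Injective g) (hT : ∀ p, g p ∈ T) : IsPartialMatching (pairsOf g) T where
  not_isDiag := by
    rintro _ ⟨i, rfl⟩ h
    exact absurd (hg (Sym2.mk_isDiag_iff.mp h)) (by simp)
  mem := by
    rintro _ ⟨i, rfl⟩ x hx
    rcases Sym2.mem_iff.mp hx with rfl | rfl <;> exact hT _
  eq_of_mem := by
    rintro _ ⟨i, rfl⟩ _ ⟨j, rfl⟩ x hx hx'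
    obtain ⟨⟨i', t⟩, rfl⟩ : x ∈ range g := verts_pairsOf g ▸ ⟨_, ⟨i, rfl⟩, hx⟩
    have key : ∀ {j : Fin m}, g (i', t) ∈ s(g (j, 0), g (j, 1)) → i' = j := fun h => by
      rcases Sym2.mem_iff.mp h with h | h
      exacts [congrArg Prod.fst (hg h), congrArg Prod.fst (hg h)]
    rw [← key hx, ← key hx']

theorem ncard_pairsOf {m : ℕ} {g : Fin m × Fin 2 → α} (hg : Injective g) :
    (pairsOf g).ncard = m := by
  rw [pairsOf, ← Nat.card_coe_set_eq, Nat.card_range_of_injective (pairsOf_injective hg),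
    Nat.card_eq_fintype_card, Fintype.card_fin]

namespace IsPartialMatching

variable {Q : Set (Sym2 α)} {T : Set α} {m : ℕ}

/-- Lists the pairs of `Q` in the order `π`, each pair oriented by `b`. -/
noncomputable def enumeration (hQ : IsPartialMatching Q T) (π : Fin m ↪ Q) (b : Fin m → Fin 2) :
    Fin m × Fin 2 ↪ T where
  toFun p := ⟨(π p.1 : Sym2 α).endpoint (b p.1 + p.2), hQ.mem _ (π p.1).2 _ (Sym2.endpoint_mem _ _)⟩
  inj' := by
    rintro ⟨i, t⟩ ⟨j, u⟩ h
    have h : (π i : Sym2 α).endpoint (b i + t) = (π j : Sym2 α).endpoint (b j + u) :=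
      congrArg Subtype.val h
    have hij : π i = π j := Subtype.ext <| hQ.eq_of_mem _ (π i).2 _ (π j).2 _
      (Sym2.endpoint_mem _ _) (by rw [h]; exact Sym2.endpoint_mem _ _)
    obtain rfl := π.injective hij
    simpa using Sym2.endpoint_injective (hQ.not_isDiag _ (π i).2) h

theorem enumeration_apply (hQ : IsPartialMatching Q T) (π : Fin m ↪ Q) (b : Fin m → Fin 2)
    (p : Fin m × Fin 2) :
    (hQ.enumeration π b p : α) = (π p.1 : Sym2 α).endpoint (b p.1 + p.2) := rfl

theorem mk_enumeration (hQ : IsPartialMatching Q T) (π : Fin m ↪ Q) (b : Fin m → Fin 2)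
    (i : Fin m) :
    s((hQ.enumeration π b (i, 0) : α), hQ.enumeration π b (i, 1)) = π i := by
  simpa [enumeration_apply] using Sym2.mk_endpoint_endpoint_add_one (π i : Sym2 α) (b i)

theorem pairsOf_enumeration [Finite α] (hQ : IsPartialMatching Q T) (hm : Q.ncard = m)
    (π : Fin m ↪ Q) (b : Fin m → Fin 2) : pairsOf (fun p => (hQ.enumeration π b p : α)) = Q := by
  have hπ : Surjective π :=
    (π.injective.bijective_of_nat_card_le (by simp [Nat.card_coe_set_eq, hm])).2
  rw [pairsOf, range_eq_iff]
  refine ⟨fun i => hQ.mk_enumeration π b i ▸ (π i).2, fun q hq => ?_⟩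
  obtain ⟨i, hi⟩ := hπ ⟨q, hq⟩
  exact ⟨i, by rw [hQ.mk_enumeration, hi]⟩

theorem enumeration_injective (hQ : IsPartialMatching Q T) :
    Injective fun πb : (Fin m ↪ Q) × (Fin m → Fin 2) => hQ.enumeration πb.1 πb.2 := by
  rintro ⟨π, b⟩ ⟨π', b'⟩ h
  have h' (p) : (hQ.enumeration π b p : α) = hQ.enumeration π' b' p := by simp only at h; rw [h]
  obtain rfl : π = π' := by
    ext i
    rw [← hQ.mk_enumeration π b i, ← hQ.mk_enumeration π' b' i, h', h']
  refine Prod.ext rfl (funext fun i => ?_)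
  have h0 := h' (i, 0)
  rw [enumeration_apply, enumeration_apply] at h0
  simpa using Sym2.endpoint_injective (hQ.not_isDiag _ (π i).2) h0

theorem exists_enumeration_eq (hQ : IsPartialMatching Q T) {e : Fin m × Fin 2 ↪ T}
    (he : pairsOf (fun p => (e p : α)) = Q) : ∃ π b, hQ.enumeration π b = e := by
  have hmem (i : Fin m) : s((e (i, 0) : α), e (i, 1)) ∈ Q := he ▸ ⟨i, rfl⟩
  let π : Fin m ↪ Q := ⟨fun i => ⟨_, hmem i⟩, fun i j h =>
    pairsOf_injective (Subtype.val_injective.comp e.injective) (congrArg Subtype.val h)⟩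
  have hb (i : Fin m) := Sym2.exists_endpoint_eq (Sym2.mem_mk_left (e (i, 0) : α) (e (i, 1)))
  refine ⟨π, fun i => (hb i).choose, ?_⟩
  ext ⟨i, t⟩
  have h0 : (π i : Sym2 α).endpoint (hb i).choose = e (i, 0) := (hb i).choose_spec
  have h1 := Sym2.mk_endpoint_endpoint_add_one (π i : Sym2 α) (hb i).choose
  rw [h0] at h1
  fin_cases t
  · simpa [enumeration_apply] using h0
  · simpa [enumeration_apply] using Sym2.congr_right.mp h1

theorem card_fiber_pairsOf [Finite α] (hQ : IsPartialMatching Q T) (hm : Q.ncard = m) :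
    Nat.card {e : Fin m × Fin 2 ↪ T // pairsOf (fun p => (e p : α)) = Q} = m ! * 2 ^ m := by
  let enum (πb : (Fin m ↪ Q) × (Fin m → Fin 2)) :
      {e : Fin m × Fin 2 ↪ T // pairsOf (fun p => (e p : α)) = Q} :=
    ⟨hQ.enumeration πb.1 πb.2, hQ.pairsOf_enumeration hm πb.1 πb.2⟩
  have hbij : Bijective enum := by
    refine ⟨fun πb πb' h => hQ.enumeration_injective (congrArg Subtype.val h), ?_⟩
    rintro ⟨e, he⟩
    obtain ⟨π, b, rfl⟩ := hQ.exists_enumeration_eq he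
    exact ⟨(π, b), rfl⟩
  rw [← Nat.card_eq_of_bijective enum hbij, Nat.card_prod, Nat.card_embedding_eq]
  simp [Nat.card_coe_set_eq, hm, Nat.descFactorial_self]

theorem ncard_verts [Finite α] (hQ : IsPartialMatching Q T) : (verts Q).ncard = 2 * Q.ncard := by
  obtain ⟨⟨e, he⟩⟩ : Nonempty {e : Fin Q.ncard × Fin 2 ↪ T // pairsOf (fun p => (e p : α)) = Q} :=
    (Nat.card_pos_iff.mp (by rw [hQ.card_fiber_pairsOf rfl]; positivity)).1
  calc (verts Q).ncard = (range fun p => (e p : α)).ncard := by rw [← verts_pairsOf, he]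
    _ = 2 * Q.ncard := by
      rw [← Nat.card_coe_set_eq,
        Nat.card_range_of_injective (f := fun p => (e p : α))
          (Subtype.val_injective.comp e.injective)]
      simp [mul_comm]

theorem verts_subset (hQ : IsPartialMatching Q T) : verts Q ⊆ T := fun _ ⟨e, he, hx⟩ =>
  hQ.mem e he _ hx

theorem ncard_diff_verts [Finite α] (hQ : IsPartialMatching Q T) :
    (T \ verts Q).ncard = T.ncard - 2 * Q.ncard := by
  rw [ncard_sdiff hQ.verts_subset, hQ.ncard_verts]

theorem pairsWithin (hQ : IsPartialMatching Q T) (A : Set α) :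
    IsPartialMatching (pairsWithin Q A) A where
  not_isDiag e he := hQ.not_isDiag e he.1
  mem _ he := he.2
  eq_of_mem e he f hf := hQ.eq_of_mem e he.1 f hf.1

theorem isPerfectMatching [Finite α] (hQ : IsPartialMatching Q T) (hm : 2 * Q.ncard = Nat.card α) :
    IsPerfectMatching Q := by
  have hV : verts Q = univ := by
    by_contra h
    exact (ncard_lt_card h).ne (hQ.ncard_verts.trans hm)
  refine ⟨hQ.not_isDiag, fun x => ?_⟩
  obtain ⟨e, he, hx⟩ : x ∈ verts Q := hV ▸ mem_univ x
  exact ⟨e, ⟨he, hx⟩, fun f hf => hQ.eq_of_mem f hf.1 e he x hf.2 hx⟩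

end IsPartialMatching

theorem card_partialMatchings_mul [Finite α] (T : Set α) (m : ℕ) :
    Nat.card {Q : Set (Sym2 α) // IsPartialMatching Q T ∧ Q.ncard = m} * (m ! * 2 ^ m) =
      (Nat.card T).descFactorial (2 * m) := by
  have hval (e : Fin m × Fin 2 ↪ T) : Injective fun p => (e p : α) :=
    Subtype.val_injective.comp e.injective
  let f (e : Fin m × Fin 2 ↪ T) : {Q : Set (Sym2 α) // IsPartialMatching Q T ∧ Q.ncard = m} :=
    ⟨pairsOf fun p => (e p : α), isPartialMatching_pairsOf (hval e) fun p => (e p).2,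
      ncard_pairsOf (hval e)⟩
  have hfiber : ∀ Q, Nat.card {e // f e = Q} = m ! * 2 ^ m := fun Q => by
    rw [← Q.2.1.card_fiber_pairsOf Q.2.2]
    exact Nat.card_congr (Equiv.subtypeEquivRight fun e => Subtype.ext_iff)
  rw [← Nat.card_eq_card_mul_of_card_fiber_eq f hfiber, Nat.card_embedding_eq]
  simp [mul_comm]

namespace IsPerfectMatching

variable {P P' : Set (Sym2 α)}

theorem eq_of_mem (hP : IsPerfectMatching P) {e f : Sym2 α} {x : α} (he : e ∈ P) (hf : f ∈ P)
    (hxe : x ∈ e) (hxf : x ∈ f) : e = f :=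
  (hP.2 x).unique ⟨he, hxe⟩ ⟨hf, hxf⟩

theorem isPartialMatching (hP : IsPerfectMatching P) : IsPartialMatching P univ where
  not_isDiag := hP.1
  mem _ _ x _ := mem_univ x
  eq_of_mem _ he _ hf _ hxe hxf := hP.eq_of_mem he hf hxe hxf

theorem exists_mk_mem (hP : IsPerfectMatching P) (x : α) : ∃ y, s(x, y) ∈ P := by
  obtain ⟨e, ⟨he, hx⟩, -⟩ := hP.2 x
  exact ⟨Sym2.Mem.other hx, (Sym2.other_spec hx).symm ▸ he⟩

noncomputable def partner (hP : IsPerfectMatching P) (x : α) : α := (hP.exists_mk_mem x).choose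

theorem mk_partner_mem (hP : IsPerfectMatching P) (x : α) : s(x, hP.partner x) ∈ P :=
  (hP.exists_mk_mem x).choose_spec

theorem eq_mk_partner (hP : IsPerfectMatching P) {e : Sym2 α} {x : α} (he : e ∈ P) (hx : x ∈ e) :
    e = s(x, hP.partner x) :=
  hP.eq_of_mem he (hP.mk_partner_mem x) hx (Sym2.mem_mk_left _ _)

theorem partner_involutive (hP : IsPerfectMatching P) : Involutive hP.partner := fun x => by
  have h := hP.eq_mk_partner (hP.mk_partner_mem x) (Sym2.mem_mk_right _ _)
  rcases Sym2.eq_iff.mp h with ⟨hx, -⟩ | ⟨hx, -⟩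
  · exact absurd (Sym2.mk_isDiag_iff.mpr hx) (hP.1 _ (hP.mk_partner_mem x))
  · exact hx.symm

theorem partner_mem_diff_verts (hP : IsPerfectMatching P) {A : Set α} {x : α}
    (hx : x ∈ A \ verts (pairsWithin P A)) : hP.partner x ∈ Aᶜ \ verts (pairsWithin P Aᶜ) := by
  have hpair := hP.mk_partner_mem x
  have hy : hP.partner x ∉ A := fun hy => hx.2 ⟨_, ⟨hpair, fun z hz => by
    rcases Sym2.mem_iff.mp hz with rfl | rfl
    exacts [hx.1, hy]⟩, Sym2.mem_mk_left _ _⟩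
  refine ⟨hy, fun ⟨e, he, hye⟩ => ?_⟩
  have := hP.eq_of_mem he.1 hpair hye (Sym2.mem_mk_right _ _)
  exact he.2 x (this ▸ Sym2.mem_mk_left _ _) hx.1

theorem ncard_diff_verts_pairsWithin_compl [Finite α] (hP : IsPerfectMatching P) (A : Set α) :
    (A \ verts (pairsWithin P A)).ncard = (Aᶜ \ verts (pairsWithin P Aᶜ)).ncard := by
  refine le_antisymm ?_ ?_
  · exact ncard_le_ncard_of_injOn _ (fun x hx => hP.partner_mem_diff_verts hx)
      hP.partner_involutive.injective.injOn
  · refine ncard_le_ncard_of_injOn _ (fun x hx => ?_) hP.partner_involutive.injective.injOn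
    simpa using hP.partner_mem_diff_verts hx

theorem eq_of_subset (hP : IsPerfectMatching P) (hP' : IsPerfectMatching P') (h : P ⊆ P') :
    P = P' := by
  refine h.antisymm fun e he => ?_
  obtain ⟨x, hx⟩ : ∃ x, x ∈ e := ⟨_, Sym2.out_fst_mem e⟩
  obtain ⟨f, ⟨hf, hxf⟩, -⟩ := hP.2 x
  rwa [hP'.eq_of_mem he (h hf) hx hxf]

theorem subset_of_pairsWithin_eq (hP : IsPerfectMatching P) (hP' : IsPerfectMatching P')
    {S : Set α} (hS : pairsWithin P S = pairsWithin P' S)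
    (hSc : pairsWithin P Sᶜ = pairsWithin P' Sᶜ)
    (hpartner : ∀ x ∈ S \ verts (pairsWithin P S), hP.partner x = hP'.partner x) : P ⊆ P' := by
  intro e he
  by_cases hin : ∀ x ∈ e, x ∈ S
  · exact (hS ▸ ⟨he, hin⟩ : e ∈ pairsWithin P' S).1
  by_cases hout : ∀ x ∈ e, x ∈ Sᶜ
  · exact (hSc ▸ ⟨he, hout⟩ : e ∈ pairsWithin P' Sᶜ).1
  push Not at hin hout
  obtain ⟨y, hye, hyS⟩ := hin
  obtain ⟨x, hxe, hxS⟩ := hout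
  rw [notMem_compl_iff] at hxS
  have hx : x ∉ verts (pairsWithin P S) := fun ⟨f, hf, hxf⟩ =>
    hyS (hf.2 y (hP.eq_of_mem hf.1 he hxf hxe ▸ hye))
  rw [hP.eq_mk_partner he hxe, hpartner x ⟨hxS, hx⟩]
  exact hP'.mk_partner_mem x

theorem ncard_pairsWithin_compl [Finite α] (hP : IsPerfectMatching P) {S : Set α} {E m k : ℕ}
    (hS : S.ncard = 2 * E + m) (hSc : Sᶜ.ncard = m + 2 * k) (hE : (pairsWithin P S).ncard = E) :
    (pairsWithin P Sᶜ).ncard = k := by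
  have hc := (hP.isPartialMatching.pairsWithin Sᶜ)
  have h := hP.ncard_diff_verts_pairsWithin_compl S
  rw [(hP.isPartialMatching.pairsWithin S).ncard_diff_verts, hc.ncard_diff_verts] at h
  have hle := ncard_le_ncard hc.verts_subset
  rw [hc.ncard_verts] at hle
  omega

end IsPerfectMatching

theorem factorial_le_card_perfectMatchings_mul [Finite α] {n : ℕ} (hα : Nat.card α = 2 * n) :
    (2 * n) ! ≤ Nat.card {P : Set (Sym2 α) // IsPerfectMatching P} * (n ! * 2 ^ n) := by
  have h := card_partialMatchings_mul (univ : Set α) n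
  rw [Nat.card_coe_set_eq, ncard_univ, hα, Nat.descFactorial_self] at h
  rw [← h]
  refine Nat.mul_le_mul_right _ (Nat.card_le_card_of_injective
    (fun Q => ⟨Q.1, Q.2.1.isPerfectMatching (by rw [Q.2.2, hα])⟩) fun Q Q' h => ?_)
  exact Subtype.ext (by simpa using h)

theorem card_perfectMatchings_pairsWithin_eq_le [Finite α] (S : Set α) (Q₁ Q₃ : Set (Sym2 α)) :
    Nat.card {P : Set (Sym2 α) //
        IsPerfectMatching P ∧ pairsWithin P S = Q₁ ∧ pairsWithin P Sᶜ = Q₃} ≤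
      (Sᶜ \ verts Q₃).ncard.descFactorial (S \ verts Q₁).ncard := by
  -- `P` is recovered from `Q₁`, `Q₃` and the partners of the points of `S` not covered by `Q₁`.
  let g (P : {P : Set (Sym2 α) //
      IsPerfectMatching P ∧ pairsWithin P S = Q₁ ∧ pairsWithin P Sᶜ = Q₃}) :
      (S \ verts Q₁ : Set α) ↪ (Sᶜ \ verts Q₃ : Set α) :=
    ⟨fun x => ⟨P.2.1.partner x, by
        have h := P.2.1.partner_mem_diff_verts (A := S) (x := x) (by rw [P.2.2.1]; exact x.2)
        simpa only [P.2.2.2] using h⟩,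
      fun x y h => Subtype.ext (P.2.1.partner_involutive.injective (congrArg Subtype.val h))⟩
  have hg : Injective g := by
    rintro ⟨P, hP, rfl, rfl⟩ ⟨P', hP', hS, hSc⟩ h
    refine Subtype.ext (hP.eq_of_subset hP' (hP.subset_of_pairsWithin_eq hP' hS.symm hSc.symm ?_))
    exact fun x hx => congrArg (fun g' => (g' ⟨x, hx⟩ : α)) h
  refine (Nat.card_le_card_of_injective g hg).trans_eq ?_
  rw [Nat.card_embedding_eq, Nat.card_coe_set_eq, Nat.card_coe_set_eq]

theorem card_perfectMatchings_pairsWithin_mul_le [Finite α] {S : Set α} {E m k : ℕ}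
    (hS : S.ncard = 2 * E + m) (hSc : Sᶜ.ncard = m + 2 * k) :
    Nat.card {P : Set (Sym2 α) // IsPerfectMatching P ∧ (pairsWithin P S).ncard = E} *
      (E ! * 2 ^ E * (k ! * 2 ^ k) * m !) ≤ (2 * E + m)! * (m + 2 * k)! := by
  let f (P : {P : Set (Sym2 α) // IsPerfectMatching P ∧ (pairsWithin P S).ncard = E}) :
      {Q // IsPartialMatching Q S ∧ Q.ncard = E} × {Q // IsPartialMatching Q Sᶜ ∧ Q.ncard = k} :=
    (⟨_, P.2.1.isPartialMatching.pairsWithin S, P.2.2⟩,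
      ⟨_, P.2.1.isPartialMatching.pairsWithin Sᶜ, P.2.1.ncard_pairsWithin_compl hS hSc P.2.2⟩)
  have hfiber : ∀ Q, Nat.card {P // f P = Q} ≤ m ! := fun Q => by
    calc Nat.card {P // f P = Q}
        ≤ Nat.card {P : Set (Sym2 α) //
            IsPerfectMatching P ∧ pairsWithin P S = Q.1.1 ∧ pairsWithin P Sᶜ = Q.2.1} :=
          Nat.card_le_card_of_injective (fun P => ⟨P.1.1, P.1.2.1, congrArg (·.1.1) P.2,
            congrArg (·.2.1) P.2⟩) fun P P' h => Subtype.ext (Subtype.ext (by simpa using h))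
      _ ≤ _ := card_perfectMatchings_pairsWithin_eq_le S Q.1.1 Q.2.1
      _ = m ! := by
        rw [Q.1.2.1.ncard_diff_verts, Q.2.2.1.ncard_diff_verts, hS, hSc, Q.1.2.2, Q.2.2.2]
        simp [Nat.descFactorial_self]
  have hX := Nat.card_le_card_mul_of_card_fiber_le f hfiber
  have hS' := card_partialMatchings_mul S E
  have hSc' := card_partialMatchings_mul Sᶜ k
  rw [Nat.card_prod] at hX
  rw [Nat.card_coe_set_eq, hS] at hS'
  rw [Nat.card_coe_set_eq, hSc] at hSc'
  have h₁ := Nat.factorial_mul_descFactorial (n := 2 * E + m) (k := 2 * E) (by omega)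
  have h₂ := Nat.factorial_mul_descFactorial (n := m + 2 * k) (k := 2 * k) (by omega)
  rw [Nat.add_sub_cancel_left] at h₁
  rw [Nat.add_sub_cancel] at h₂
  calc _ ≤ _ * (E ! * 2 ^ E * (k ! * 2 ^ k) * m !) := Nat.mul_le_mul_right _ hX
    _ = m ! * (2 * E + m).descFactorial (2 * E) * (m ! * (m + 2 * k).descFactorial (2 * k)) := by
      rw [← hS', ← hSc']; ring
    _ = _ := by rw [h₁, h₂]

open Real

theorem mul_entH_div (u : ℝ) {c : ℝ} (hc : c ≠ 0) : c * entH (u / c) = u * log c - u * log u := by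
  rcases eq_or_ne u 0 with rfl | hu
  · simp [entH]
  · rw [entH, log_div hu hc]
    field_simp
    ring

theorem mul_log_two_mul (u : ℝ) : u * log (2 * u) = u * log 2 + u * log u := by
  rcases eq_or_ne u 0 with rfl | hu
  · simp
  · rw [log_mul two_ne_zero hu]
    ring

theorem two_mul_entF_eq {E m k : ℝ} (ha : 2 * E + m ≠ 0) (hn : E + m + k ≠ 0) :
    2 * (E + m + k) * entF ((2 * E + m) / (2 * (E + m + k))) (2 * E / (2 * E + m)) =
      (2 * E + m) * log (2 * E + m) + (m + 2 * k) * log (m + 2 * k) -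
        (E * log E + m * log m + k * log k + (E + m + k) * log (E + m + k)) -
        (2 * E + m + 2 * k) * log 2 := by
  set c := 2 * (E + m + k)
  have hc : c ≠ 0 := mul_ne_zero two_ne_zero hn
  have h₁ : 2 * E / (2 * E + m) * ((2 * E + m) / c) = 2 * E / c := by field_simp
  have h₂ : (1 - 2 * E / (2 * E + m)) * ((2 * E + m) / c) = m / c := by field_simp; ring
  have h₃ : 1 - (2 - 2 * E / (2 * E + m)) * ((2 * E + m) / c) = 2 * k / c := by
    field_simp; ring
  have h₄ : 1 - (2 * E + m) / c = (m + 2 * k) / c := by field_simp; ring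
  have hsplit : c * entF ((2 * E + m) / c) (2 * E / (2 * E + m)) =
      1 / 2 * (c * entH (2 * E / c)) + c * entH (m / c) + 1 / 2 * (c * entH (2 * k / c)) -
        c * entH ((2 * E + m) / c) - c * entH ((m + 2 * k) / c) := by
    rw [entF, entHH, h₁, h₂, h₃, h₄]
    ring
  rw [hsplit]
  simp only [mul_entH_div _ hc]
  linear_combination (-(E + m + k)) * log_mul two_ne_zero hn - mul_log_two_mul E -
    mul_log_two_mul k

/-- The main term `n ^ n e ^ (-n)` of Stirling's formula. -/
noncomputable def stirlingTerm (n : ℕ) : ℝ := (n : ℝ) ^ n / exp n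

theorem stirlingTerm_pos (n : ℕ) : 0 < stirlingTerm n := by
  rcases n.eq_zero_or_pos with rfl | hn
  · simp [stirlingTerm]
  · unfold stirlingTerm; positivity

theorem stirlingTerm_eq_exp (n : ℕ) : stirlingTerm n = exp (n * log n - n) := by
  rw [stirlingTerm, exp_sub]
  rcases n.eq_zero_or_pos with rfl | hn
  · simp
  · rw [← log_pow, exp_log (by positivity)]

theorem stirlingTerm_le_factorial (n : ℕ) : stirlingTerm n ≤ n ! := by
  rw [stirlingTerm, div_le_iff₀ (exp_pos _), mul_comm, ← div_le_iff₀ (by positivity)]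
  exact pow_div_factorial_le_exp _ n.cast_nonneg n

theorem factorial_le_exp_one_mul_stirlingTerm (n : ℕ) :
    (n ! : ℝ) ≤ exp 1 * (n + 1) * stirlingTerm n := by
  obtain _ | j := n
  · simp [stirlingTerm, one_le_exp zero_le_one]
  set n := j + 1
  have hS : Stirling.stirlingSeq n ≤ exp 1 / √2 := by
    simpa using Stirling.stirlingSeq'_antitone (Nat.zero_le j)
  have hn : (0 : ℝ) < n := by positivity
  have hsqrt : √(n : ℝ) ≤ n + 1 := Real.sqrt_le_iff.mpr ⟨by positivity, by nlinarith⟩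
  rw [Stirling.stirlingSeq, div_le_iff₀ (by positivity)] at hS
  calc (n ! : ℝ) ≤ exp 1 / √2 * (√(2 * n) * (n / exp 1) ^ n) := hS
    _ = exp 1 * √n * stirlingTerm n := by
      rw [stirlingTerm, Real.sqrt_mul zero_le_two, div_pow, exp_one_pow]
      field_simp
    _ ≤ exp 1 * (n + 1) * stirlingTerm n := by gcongr; exact (stirlingTerm_pos n).le

theorem stirlingTerm_mul_eq_exp_entF_mul (E m k : ℕ) (ha : 0 < 2 * E + m) :
    stirlingTerm (2 * E + m) * stirlingTerm (m + 2 * k) *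
        (stirlingTerm (E + m + k) * 2 ^ (E + m + k)) =
      exp (2 * (E + m + k) * entF ((2 * E + m) / (2 * (E + m + k))) (2 * E / (2 * E + m))) *
        (stirlingTerm E * 2 ^ E * (stirlingTerm k * 2 ^ k) * stirlingTerm m *
          stirlingTerm (2 * (E + m + k))) := by
  have two_pow (j : ℕ) : (2 : ℝ) ^ j = exp (j * log 2) := by
    rw [← log_pow, exp_log (by positivity)]
  have ha' : (2 * E + m : ℝ) ≠ 0 := by exact_mod_cast ha.ne'
  have hn' : (E + m + k : ℝ) ≠ 0 := by norm_cast; omega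
  simp only [stirlingTerm_eq_exp, two_pow, ← exp_add]
  rw [two_mul_entF_eq ha' hn']
  congr 1
  push_cast
  linear_combination (-2) * mul_log_two_mul ((E : ℝ) + m + k)

theorem factorial_mul_factorial_mul_le (E m k : ℕ) (ha : 0 < 2 * E + m) :
    ((2 * E + m)! * (m + 2 * k)! * ((E + m + k)! * 2 ^ (E + m + k)) : ℝ) ≤
      (2 * (E + m + k) + 1) ^ 6 *
        exp (2 * (E + m + k) * entF ((2 * E + m) / (2 * (E + m + k))) (2 * E / (2 * E + m))) *
        (E ! * 2 ^ E * (k ! * 2 ^ k) * m ! * (2 * (E + m + k))!) := by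
  have hup (u : ℕ) (hu : u ≤ 2 * (E + m + k)) :
      (u ! : ℝ) ≤ (2 * (E + m + k) + 1) ^ 2 * stirlingTerm u := by
    have hu' : (u : ℝ) ≤ 2 * (E + m + k) := by exact_mod_cast hu
    have hn : (1 : ℝ) ≤ E + m + k := by norm_cast; omega
    have he : exp 1 ≤ 2 * (E + m + k) + 1 := by linarith [exp_one_lt_d9]
    calc (u ! : ℝ) ≤ exp 1 * (u + 1) * stirlingTerm u := factorial_le_exp_one_mul_stirlingTerm u
      _ ≤ (2 * (E + m + k) + 1) ^ 2 * stirlingTerm u := by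
        rw [sq]
        gcongr
        exact (stirlingTerm_pos u).le
  have hnn (u : ℕ) : 0 ≤ (2 * ((E : ℝ) + m + k) + 1) ^ 2 * stirlingTerm u :=
    mul_nonneg (by positivity) (stirlingTerm_pos u).le
  calc ((2 * E + m)! * (m + 2 * k)! * ((E + m + k)! * 2 ^ (E + m + k)) : ℝ)
      ≤ (2 * (E + m + k) + 1) ^ 2 * stirlingTerm (2 * E + m) *
          ((2 * (E + m + k) + 1) ^ 2 * stirlingTerm (m + 2 * k)) *
          ((2 * (E + m + k) + 1) ^ 2 * stirlingTerm (E + m + k) * 2 ^ (E + m + k)) := by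
        gcongr
        · exact mul_nonneg (hnn _) (hnn _)
        · exact hnn _
        all_goals exact hup _ (by omega)
    _ = (2 * (E + m + k) + 1) ^ 6 * (stirlingTerm (2 * E + m) * stirlingTerm (m + 2 * k) *
          (stirlingTerm (E + m + k) * 2 ^ (E + m + k))) := by ring
    _ = (2 * (E + m + k) + 1) ^ 6 *
          exp (2 * (E + m + k) * entF ((2 * E + m) / (2 * (E + m + k))) (2 * E / (2 * E + m))) *
          (stirlingTerm E * 2 ^ E * (stirlingTerm k * 2 ^ k) * stirlingTerm m *
            stirlingTerm (2 * (E + m + k))) := by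
        rw [stirlingTerm_mul_eq_exp_entF_mul E m k ha]
        ring
    _ ≤ _ := by
        gcongr
        · exact (stirlingTerm_pos _).le
        · exact (stirlingTerm_pos _).le
        · exact mul_nonneg (stirlingTerm_pos _).le (by positivity)
        all_goals exact stirlingTerm_le_factorial _

theorem card_perfectMatchings_pairsWithin_le [Finite α] {S : Set α} {E m k : ℕ}
    (hS : S.ncard = 2 * E + m) (hSc : Sᶜ.ncard = m + 2 * k) (ha : 0 < 2 * E + m) :
    (Nat.card {P : Set (Sym2 α) // IsPerfectMatching P ∧ (pairsWithin P S).ncard = E} : ℝ) ≤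
      (2 * (E + m + k) + 1) ^ 6 *
        exp (2 * (E + m + k) * entF ((2 * E + m) / (2 * (E + m + k))) (2 * E / (2 * E + m))) *
        Nat.card {P : Set (Sym2 α) // IsPerfectMatching P} := by
  have hα : Nat.card α = 2 * (E + m + k) := by
    rw [← ncard_add_ncard_compl S, hS, hSc]; ring
  have hcount :
      (Nat.card {P : Set (Sym2 α) // IsPerfectMatching P ∧ (pairsWithin P S).ncard = E} *
        (E ! * 2 ^ E * (k ! * 2 ^ k) * (m !)) : ℝ) ≤ (2 * E + m)! * (m + 2 * k)! := by
    exact_mod_cast card_perfectMatchings_pairsWithin_mul_le hS hSc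
  have htotal : ((2 * (E + m + k))! : ℝ) ≤
      Nat.card {P : Set (Sym2 α) // IsPerfectMatching P} * ((E + m + k)! * 2 ^ (E + m + k)) := by
    exact_mod_cast factorial_le_card_perfectMatchings_mul hα
  have hD : (0 : ℝ) < E ! * 2 ^ E * (k ! * 2 ^ k) * (m !) := by positivity
  have hQ : (0 : ℝ) < (E + m + k)! * 2 ^ (E + m + k) := by positivity
  have hR : 0 ≤ (2 * ((E : ℝ) + m + k) + 1) ^ 6 *
    exp (2 * (E + m + k) * entF ((2 * E + m) / (2 * (E + m + k))) (2 * E / (2 * E + m))) := by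
    positivity
  refine le_of_mul_le_mul_right ?_ (mul_pos hD hQ)
  calc _ = _ := (mul_assoc _ _ _).symm
    _ ≤ _ := mul_le_mul_of_nonneg_right hcount hQ.le
    _ ≤ _ := factorial_mul_factorial_mul_le E m k ha
    _ ≤ _ := mul_le_mul_of_nonneg_left (mul_le_mul_of_nonneg_left htotal hD.le) hR
    _ = _ := by ring

theorem stmt_6 :
    ∃ C : ℝ, ∀ N d M : ℕ, 0 < N → 0 < d → 0 < M → M ≤ N → Even (N * d) →
      ∀ U : Finset (Fin N), U.card = M →
      ∀ E : ℕ, 2 * E ≤ M * d → 2 * (M * d) ≤ N * d + 2 * E →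
        (Nat.card {P : Set (Sym2 (Fin N × Fin d)) //
            IsPerfectMatching P ∧ pairsIn P ↑U = E} : ℝ) ≤
          ((N * d + 1 : ℝ)) ^ C *
            Real.exp ((N * d : ℝ) *
              entF ((M : ℝ) / N) ((2 * E : ℝ) / (M * d))) *
            (Nat.card {P : Set (Sym2 (Fin N × Fin d)) // IsPerfectMatching P} : ℝ) := by
  refine ⟨6, fun N d M hN hd hM hMN ⟨n, hn⟩ U hU E hE hEN => ?_⟩
  obtain ⟨m, hm⟩ : ∃ m, M * d = 2 * E + m := ⟨M * d - 2 * E, by omega⟩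
  obtain ⟨k, rfl⟩ : ∃ k, n = E + m + k := ⟨n - E - m, by omega⟩
  let S : Set (Fin N × Fin d) := {x | x.1 ∈ U}
  have hS : S.ncard = 2 * E + m := by
    rw [← hm, ← hU, show S = ↑(U ×ˢ (Finset.univ : Finset (Fin d))) by ext; simp [S],
      ncard_coe_finset, Finset.card_product, Finset.card_univ, Fintype.card_fin]
  have hSc : Sᶜ.ncard = m + 2 * k := by
    have := ncard_add_ncard_compl S
    simp only [Nat.card_eq_fintype_card, Fintype.card_prod, Fintype.card_fin] at this
    omega
  have hNd : (N * d : ℝ) = 2 * (E + m + k) := by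
    exact_mod_cast (show N * d = 2 * (E + m + k) by omega)
  have hMd : (M * d : ℝ) = 2 * E + m := by exact_mod_cast hm
  have hx : (M : ℝ) / N = (2 * E + m) / (2 * (E + m + k)) := by
    rw [← hMd, ← hNd, mul_div_mul_right _ _ (by positivity)]
  rw [show (6 : ℝ) = (6 : ℕ) by norm_num, rpow_natCast, hNd, hx, hMd]
  exact card_perfectMatchings_pairsWithin_le hS hSc (by rw [← hm]; positivity)
end

section
/- For all real numbers x, t ∈ [0,1] with (2−t)·x ≤ 1, one has F(x,t) ≤ 0, with equality if and only if x = 0 or x = t. -/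
lemma gibbs_le (p q : ℝ) (hp : 0 ≤ p) (hq : 0 ≤ q) (h0 : q = 0 → p = 0) :
    p * Real.log q - p * Real.log p ≤ q - p := by
  rcases eq_or_lt_of_le hp with h | h
  · simp [← h]
    exact hq
  · have hq' : 0 < q := hq.lt_of_ne' (fun e => by simp [h0 e] at h)
    have h1 : Real.log (q / p) ≤ q / p - 1 :=
      Real.log_le_sub_one_of_pos (div_pos hq' h)
    rw [Real.log_div hq'.ne' h.ne'] at h1
    have h2 := mul_le_mul_of_nonneg_left h1 h.le
    have h3 : p * (q / p) = q := by field_simp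
    nlinarith [h2, h3]

lemma gibbs_eq (p q : ℝ) (hp : 0 ≤ p) (hq : 0 ≤ q) (h0 : q = 0 → p = 0) :
    p * Real.log q - p * Real.log p = q - p ↔ p = q := by
  rcases eq_or_lt_of_le hp with h | h
  · subst h
    simp [eq_comm]
  · have hq' : 0 < q := hq.lt_of_ne' (fun e => by simp [h0 e] at h)
    constructor
    · intro he
      by_contra hne
      have hne' : q / p ≠ 1 := by
        intro e
        exact hne ((div_eq_one_iff_eq h.ne').mp e).symm
      have h1 : Real.log (q / p) < q / p - 1 :=
        Real.log_lt_sub_one_of_pos (div_pos hq' h) hne'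
      rw [Real.log_div hq'.ne' h.ne'] at h1
      have h2 := mul_lt_mul_of_pos_left h1 h
      have h3 : p * (q / p) = q := by field_simp
      nlinarith [h2, h3]
    · intro e
      subst e
      ring

theorem stmt_10 (x t : ℝ) (hx : x ∈ Set.Icc (0 : ℝ) 1) (ht : t ∈ Set.Icc (0 : ℝ) 1)
    (hxt : (2 - t) * x ≤ 1) :
    entF x t ≤ 0 ∧ (entF x t = 0 ↔ x = 0 ∨ x = t) := by
  obtain ⟨hx0, hx1⟩ := hx
  obtain ⟨ht0, ht1⟩ := ht
  have hx1t : x = 1 → t = 1 := fun e => by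
    rw [e, mul_one] at hxt; linarith
  -- the key identity
  have hB : t * x * Real.log (x ^ 2) + 2 * ((1 - t) * x * Real.log (x * (1 - x)))
        + (1 - (2 - t) * x) * Real.log ((1 - x) ^ 2)
      = 2 * x * Real.log x + 2 * (1 - x) * Real.log (1 - x) := by
    rcases eq_or_lt_of_le hx0 with h | h
    · simp [← h]
    · rcases eq_or_lt_of_le hx1 with h' | h'
      · have ht' := hx1t h'
        subst ht'
        subst h'
        norm_num
      · rw [Real.log_pow, Real.log_pow, Real.log_mul h.ne' (by linarith)]
        push_cast
        ring
  have hA : 2 * entF x t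
      = (t * x * Real.log (x ^ 2) - t * x * Real.log (t * x))
      + 2 * ((1 - t) * x * Real.log (x * (1 - x)) - (1 - t) * x * Real.log ((1 - t) * x))
      + ((1 - (2 - t) * x) * Real.log ((1 - x) ^ 2)
          - (1 - (2 - t) * x) * Real.log (1 - (2 - t) * x)) := by
    simp only [entF, entH, entHH]
    linear_combination -hB
  -- hypotheses for Gibbs
  have hp1 : 0 ≤ t * x := mul_nonneg ht0 hx0
  have hp2 : 0 ≤ (1 - t) * x := mul_nonneg (by linarith) hx0
  have hp4 : 0 ≤ 1 - (2 - t) * x := by linarith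
  have h01 : x ^ 2 = 0 → t * x = 0 := fun e => by
    have : x = 0 := by nlinarith [sq_nonneg x]
    simp [this]
  have h02 : x * (1 - x) = 0 → (1 - t) * x = 0 := fun e => by
    rcases mul_eq_zero.mp e with e' | e'
    · simp [e']
    · have hx' : x = 1 := by linarith
      rw [hx1t hx']
      ring
  have h04 : (1 - x) ^ 2 = 0 → 1 - (2 - t) * x = 0 := fun e => by
    have hx' : x = 1 := by nlinarith [sq_nonneg (1 - x)]
    rw [hx', hx1t hx']
    ring
  have g1 := gibbs_le (t * x) (x ^ 2) hp1 (sq_nonneg x) h01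
  have g2 := gibbs_le ((1 - t) * x) (x * (1 - x)) hp2
    (mul_nonneg hx0 (by linarith)) h02
  have g4 := gibbs_le (1 - (2 - t) * x) ((1 - x) ^ 2) hp4 (sq_nonneg _) h04
  have hsum : (x ^ 2 - t * x) + 2 * (x * (1 - x) - (1 - t) * x)
      + ((1 - x) ^ 2 - (1 - (2 - t) * x)) = 0 := by ring
  refine ⟨by linarith, ?_, ?_⟩
  · intro hF
    have e1 : t * x * Real.log (x ^ 2) - t * x * Real.log (t * x) = x ^ 2 - t * x := by
      linarith
    have hpq1 := (gibbs_eq (t * x) (x ^ 2) hp1 (sq_nonneg x) h01).mp e1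
    have hxe : x * (t - x) = 0 := by nlinarith [hpq1]
    rcases mul_eq_zero.mp hxe with e | e
    · exact Or.inl e
    · exact Or.inr (by linarith)
  · intro hc
    rcases hc with e | e
    · subst e
      simp [entF, entH, entHH]
    · subst e
      have h2 : 2 * entF x x = 0 := by
        rw [hA]
        have e1 : x * x = x ^ 2 := by ring
        have e2 : (1 - x) * x = x * (1 - x) := by ring
        have e3 : 1 - (2 - x) * x = (1 - x) ^ 2 := by ring
        rw [e1, e2, e3]
        ring
      linarith
end

section
/- Fix x ∈ (0,1). Then the function t ↦ F(x,t) is strictly monotone decreasing on the interval [x,1], with F(x,x) = 0 and F(x,1) = −H(x)/2; moreover, for every t ∈ (x,1) its derivative with respect to t equals (x/2)·log(1 − (t−x)/(t·(1−(2−t)·x))). -/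
/-!
Differentiating, `∂ₜF(x,t) = (x/2) log (x (1-t)² / (t (1 - (2-t) x)))`, and the identity
`t (1 - (2-t) x) = x (1-t)² + (t - x)` shows that the argument of the logarithm lies in `(0,1)`
for `x < t < 1`. The endpoint values follow from `h (a b) = b h a + a h b` and
`1 - (2-x) x = (1-x)²`.
-/

open Real Set

lemma entH_mul (a b : ℝ) : entH (a * b) = b * entH a + a * entH b := by
  rcases eq_or_ne a 0 with rfl | ha
  · simp [entH]
  rcases eq_or_ne b 0 with rfl | hb
  · simp [entH]
  simp only [entH, log_mul ha hb]
  ring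

lemma entH_eq_neg_mul_log : entH = fun x => -(x * log x) :=
  funext fun x => neg_mul x (log x)

@[fun_prop]
lemma continuous_entH : Continuous entH :=
  entH_eq_neg_mul_log ▸ continuous_mul_log.neg

lemma hasDerivAt_entH {y : ℝ} (hy : y ≠ 0) : HasDerivAt entH (-(log y + 1)) y :=
  entH_eq_neg_mul_log ▸ (hasDerivAt_mul_log hy).neg

lemma continuous_entF (x : ℝ) : Continuous (entF x) := by
  unfold entF
  fun_prop

lemma entF_self (x : ℝ) : entF x x = 0 := by
  have hsq : 1 - (2 - x) * x = (1 - x) * (1 - x) := by ring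
  simp only [entF, entHH, hsq, entH_mul]
  ring

lemma entF_one (x : ℝ) : entF x 1 = -entHH x / 2 := by
  have h1 : 1 - (2 - 1) * x = 1 - x := by ring
  simp only [entF, entHH, h1, sub_self, zero_mul, one_mul, entH, neg_zero, log_zero, mul_zero]
  ring

lemma mul_one_sub_two_sub_mul (x t : ℝ) :
    t * (1 - (2 - t) * x) = x * (1 - t) ^ 2 + (t - x) := by
  ring

lemma one_sub_div_eq_mul_sq_div {x t : ℝ} (h : t * (1 - (2 - t) * x) ≠ 0) :
    1 - (t - x) / (t * (1 - (2 - t) * x)) = x * (1 - t) ^ 2 / (t * (1 - (2 - t) * x)) := by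
  rw [eq_div_iff h, sub_mul, div_mul_cancel₀ _ h, mul_one_sub_two_sub_mul]
  ring

lemma one_sub_two_sub_mul_pos {x t : ℝ} (hx : 0 ≤ x) (hxt : x < t) : 0 < 1 - (2 - t) * x := by
  have ht : 0 < t := hx.trans_lt hxt
  refine pos_of_mul_pos_right (a := t) ?_ ht.le
  rw [mul_one_sub_two_sub_mul]
  nlinarith [sq_nonneg (1 - t)]

lemma hasDerivAt_entF {x t : ℝ} (hx : x ≠ 0) (ht : t ≠ 0) (ht1 : t ≠ 1)
    (hd : 1 - (2 - t) * x ≠ 0) :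
    HasDerivAt (entF x) (x / 2 * log (1 - (t - x) / (t * (1 - (2 - t) * x)))) t := by
  have h1t : 1 - t ≠ 0 := sub_ne_zero.mpr (Ne.symm ht1)
  have h1 : HasDerivAt (fun t => entH (t * x)) (-(log (t * x) + 1) * x) t := by
    exact (hasDerivAt_entH (mul_ne_zero ht hx)).comp t (hasDerivAt_mul_const x)
  have h2 : HasDerivAt (fun t => entH ((1 - t) * x)) (-(log ((1 - t) * x) + 1) * -x) t := by
    have hlin : HasDerivAt (fun t : ℝ => (1 - t) * x) (-x) t := by
      simpa using ((hasDerivAt_id t).const_sub 1).mul_const x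
    exact (hasDerivAt_entH (mul_ne_zero h1t hx)).comp t hlin
  have h3 : HasDerivAt (fun t => entH (1 - (2 - t) * x)) (-(log (1 - (2 - t) * x) + 1) * x) t := by
    have hlin : HasDerivAt (fun t : ℝ => 1 - (2 - t) * x) x t := by
      simpa using (((hasDerivAt_id t).const_sub 2).mul_const x).const_sub 1
    exact (hasDerivAt_entH hd).comp t hlin
  refine ((((h1.const_mul (1 / 2)).add h2).add (h3.const_mul (1 / 2))).sub_const
    (entHH x)).congr_deriv ?_
  rw [one_sub_div_eq_mul_sq_div (mul_ne_zero ht hd), log_div (by positivity) (mul_ne_zero ht hd),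
    log_mul hx (by positivity), log_pow, log_mul ht hd, log_mul ht hx, log_mul h1t hx]
  push_cast
  ring

lemma log_one_sub_div_neg {x t : ℝ} (hx : 0 < x) (hxt : x < t) (ht1 : t < 1) :
    log (1 - (t - x) / (t * (1 - (2 - t) * x))) < 0 := by
  have hD : 0 < t * (1 - (2 - t) * x) :=
    mul_pos (hx.trans hxt) (one_sub_two_sub_mul_pos hx.le hxt)
  refine log_neg ?_ ?_
  · rw [one_sub_div_eq_mul_sq_div hD.ne']
    have : 0 < 1 - t := sub_pos.mpr ht1
    positivity
  · have : 0 < (t - x) / (t * (1 - (2 - t) * x)) := div_pos (sub_pos.mpr hxt) hD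
    linarith

theorem stmt_11 (x : ℝ) (hx : x ∈ Set.Ioo (0 : ℝ) 1) :
    StrictAntiOn (fun t => entF x t) (Set.Icc x 1) ∧
    entF x x = 0 ∧ entF x 1 = -entHH x / 2 ∧
    ∀ t ∈ Set.Ioo x 1,
      HasDerivAt (fun t => entF x t)
        (x / 2 * Real.log (1 - (t - x) / (t * (1 - (2 - t) * x)))) t := by
  have hx0 : 0 < x := hx.1
  have hderiv : ∀ t ∈ Ioo x 1,
      HasDerivAt (entF x) (x / 2 * log (1 - (t - x) / (t * (1 - (2 - t) * x)))) t :=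
    fun t ⟨hxt, ht1⟩ => hasDerivAt_entF hx0.ne' (hx0.trans hxt).ne' ht1.ne
      (one_sub_two_sub_mul_pos hx0.le hxt).ne'
  refine ⟨?_, entF_self x, entF_one x, hderiv⟩
  refine strictAntiOn_of_deriv_neg (convex_Icc x 1) (continuous_entF x).continuousOn
    fun t ht => ?_
  rw [interior_Icc] at ht
  rw [(hderiv t ht).deriv]
  exact mul_neg_of_pos_of_neg (half_pos hx0) (log_one_sub_div_neg hx0 ht.1 ht.2)
end

section
/- Fix t ∈ (0,1). Then the function x ↦ F(x,t)/H(x) is continuous and strictly monotone increasing on (0,t], takes the value 0 at x = t, and its range is exactly the interval (−t/2, 0]; in particular it maps (0,t] onto (−t/2, 0] bijectively. -/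
/-!
Since `h (t x) = x h t + t h x`, subtracting `(t/2) H` from `F(·, t)` cancels every `h x` term:
`F / H = psi / H - t / 2`, where `psi` is smooth at `0` with `psi 0 = 0`, and
`psi t t = (t/2) H t`. As `H x ≥ -x log x`, `psi / H → 0` at `0⁺`, so it remains to show that
`psi / H` increases, i.e. that the Wronskian `W = psi' H - psi H'` is positive on `(0, t)`.
`W` tends to `0` at `0⁺` and vanishes at `t`, and `W'` has the sign of
`V = 2 psi (1 - (2-t) x) - (2-t)(1-t) x H`. Since `V'' = -4(2-t) psi' - 2(2-t)(1-t) H'` is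
increasing, `V'` is convex; with `V 0 = 0 > V t` this forbids `V` from becoming nonnegative again
once it is nonpositive, so `W` first increases and then decreases.
-/

open Real Set Filter Topology Asymptotics

section Order

variable {α β : Type*} [ConditionallyCompleteLinearOrder α] [TopologicalSpace α]
  [OrderTopology α] [DenselyOrdered α] [LinearOrder β] [TopologicalSpace β] [OrderTopology β]
  {f : α → β} {a b x : α} {L : β}

theorem StrictMonoOn.lt_of_tendsto_nhdsGT (hf : StrictMonoOn f (Ioc a b))
    (hlim : Tendsto f (𝓝[>] a) (𝓝 L)) (hx : x ∈ Ioc a b) : L < f x := by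
  obtain ⟨u, hau, hux⟩ := exists_between hx.1
  have hu : u ∈ Ioc a b := ⟨hau, hux.le.trans hx.2⟩
  have : (𝓝[>] a).NeBot := nhdsGT_neBot_of_exists_gt ⟨u, hau⟩
  have hLu : L ≤ f u := by
    refine le_of_tendsto hlim ?_
    filter_upwards [Ioo_mem_nhdsGT hau] with v hv
    exact hf.monotoneOn ⟨hv.1, hv.2.le.trans hu.2⟩ hu hv.2.le
  exact hLu.trans_lt (hf hu hx hux)

theorem StrictMonoOn.image_Ioc_of_tendsto (hab : a < b) (hc : ContinuousOn f (Ioc a b))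
    (hf : StrictMonoOn f (Ioc a b)) (hlim : Tendsto f (𝓝[>] a) (𝓝 L)) :
    f '' Ioc a b = Ioc L (f b) := by
  refine Subset.antisymm ?_ fun y hy => ?_
  · rintro _ ⟨x, hx, rfl⟩
    exact ⟨hf.lt_of_tendsto_nhdsGT hlim hx, hf.monotoneOn hx ⟨hab, le_rfl⟩ hx.2⟩
  · have : (𝓝[>] a).NeBot := nhdsGT_neBot_of_exists_gt ⟨b, hab⟩
    obtain ⟨u, hfu, hu⟩ :=
      ((hlim.eventually (gt_mem_nhds hy.1)).and (Ioo_mem_nhdsGT hab)).exists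
    exact hc.surjOn_Icc ⟨hu.1, hu.2.le⟩ ⟨hab, le_rfl⟩ ⟨hfu.le, hy.2⟩

end Order

theorem neg_of_convexOn_deriv {f f' : ℝ → ℝ} {a b y z : ℝ} (hf : ContinuousOn f (Icc a b))
    (hf' : ∀ x ∈ Ioo a b, HasDerivAt f (f' x) x) (hconv : ConvexOn ℝ (Ioo a b) f')
    (ha : f a = 0) (hb : f b < 0) (hay : a < y) (hyz : y < z) (hzb : z < b) (hy : f y ≤ 0) :
    f z < 0 := by
  by_contra! hz
  have mvt {u v : ℝ} (hau : a ≤ u) (huv : u < v) (hvb : v ≤ b) :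
      ∃ c ∈ Ioo u v, f' c = (f v - f u) / (v - u) :=
    exists_hasDerivAt_eq_slope f f' huv (hf.mono (Icc_subset_Icc hau hvb))
      fun x hx => hf' x ⟨hau.trans_lt hx.1, hx.2.trans_le hvb⟩
  obtain ⟨p, hp, hfp⟩ := mvt le_rfl hay (hyz.trans hzb).le
  obtain ⟨q, hq, hfq⟩ := mvt hay.le hyz hzb.le
  obtain ⟨r, hr, hfr⟩ := mvt (hay.trans hyz).le hzb le_rfl
  have hp' : f' p ≤ 0 := hfp ▸ div_nonpos_of_nonpos_of_nonneg (by linarith) (by linarith)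
  have hq' : 0 ≤ f' q := hfq ▸ div_nonneg (by linarith) (by linarith)
  have hr' : f' r < 0 := hfr ▸ div_neg_of_neg_of_pos (by linarith) (by linarith)
  have hpq := hp.2.trans hq.1
  have hqr := hq.2.trans hr.1
  have hslope := hconv.slope_mono_adjacent ⟨hp.1, hpq.trans (hqr.trans hr.2)⟩
    ⟨hay.trans (hyz.trans hr.1), hr.2⟩ hpq hqr
  have : 0 ≤ (f' q - f' p) / (q - p) := div_nonneg (by linarith) (by linarith)
  have : (f' r - f' q) / (r - q) < 0 := div_neg_of_neg_of_pos (by linarith) (by linarith)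
  linarith

theorem pos_of_tendsto_of_deriv_sign {W W' : ℝ → ℝ} {a b x : ℝ}
    (hW : ∀ y ∈ Ioo a b, HasDerivAt W (W' y) y) (hWc : ContinuousOn W (Ioc a b))
    (ha : Tendsto W (𝓝[>] a) (𝓝 0)) (hb : W b = 0)
    (hsign : ∀ y ∈ Ioo a b, ∀ z ∈ Ioo y b, W' y ≤ 0 → W' z < 0) (hx : x ∈ Ioo a b) :
    0 < W x := by
  by_cases hpos : ∀ y ∈ Ioo a x, 0 < W' y
  · have hmono : StrictMonoOn W (Ioc a x) := by
      refine strictMonoOn_of_deriv_pos (convex_Ioc a x)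
        (hWc.mono (Ioc_subset_Ioc_right hx.2.le)) ?_
      rw [interior_Ioc]
      intro y hy
      rw [(hW y ⟨hy.1, hy.2.trans hx.2⟩).deriv]
      exact hpos y hy
    exact hmono.lt_of_tendsto_nhdsGT ha ⟨hx.1, le_rfl⟩
  · push Not at hpos
    obtain ⟨y, hy, hWy⟩ := hpos
    have hanti : StrictAntiOn W (Icc x b) := by
      refine strictAntiOn_of_deriv_neg (convex_Icc x b)
        (hWc.mono (Icc_subset_Ioc_iff hx.2.le |>.2 ⟨hx.1, le_rfl⟩)) ?_
      rw [interior_Icc]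
      intro z hz
      rw [(hW z ⟨hx.1.trans hz.1, hz.2⟩).deriv]
      exact hsign y ⟨hy.1, hy.2.trans hx.2⟩ z ⟨hy.2.trans hz.1, hz.2⟩ hWy
    simpa [hb] using hanti ⟨le_rfl, hx.2.le⟩ ⟨hx.2.le, le_rfl⟩ hx.2

namespace EntropyRatio

variable {t x : ℝ}

theorem entH_eq_negMulLog : entH = negMulLog := rfl

theorem entH_pos (h0 : 0 < x) (h1 : x < 1) : 0 < entH x := by
  simpa [entH, neg_mul, ← mul_neg] using mul_pos h0 (neg_pos.2 (log_neg h0 h1))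

theorem entHH_pos (h0 : 0 < x) (h1 : x < 1) : 0 < entHH x :=
  add_pos (entH_pos h0 h1) (entH_pos (by linarith) (by linarith))

theorem continuous_entHH : Continuous entHH := by
  unfold entHH; rw [entH_eq_negMulLog]; fun_prop

theorem one_sub_two_sub_mul_pos (ht : t < 1) (hx : x ≤ t) : 0 < 1 - (2 - t) * x := by
  nlinarith [mul_le_mul_of_nonneg_left hx (by linarith : (0 : ℝ) ≤ 2 - t)]

noncomputable def psi (t x : ℝ) : ℝ :=
  (entH t / 2 + entH (1 - t)) * x + entH (1 - (2 - t) * x) / 2 - (2 - t) / 2 * entH (1 - x)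

noncomputable def psi' (t x : ℝ) : ℝ :=
  entH t / 2 + entH (1 - t) + (2 - t) / 2 * (log (1 - (2 - t) * x) - log (1 - x))

noncomputable def entHH' (x : ℝ) : ℝ := log (1 - x) - log x

noncomputable def wronskian (t x : ℝ) : ℝ := psi' t x * entHH x - psi t x * entHH' x

noncomputable def wronskianNum (t x : ℝ) : ℝ :=
  2 * psi t x * (1 - (2 - t) * x) - (2 - t) * (1 - t) * (x * entHH x)

noncomputable def wronskianNum' (t x : ℝ) : ℝ :=
  2 * psi' t x * (1 - (2 - t) * x) - 2 * (2 - t) * psi t x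
    - (2 - t) * (1 - t) * (entHH x + x * entHH' x)

theorem entF_eq (x t : ℝ) : entF x t = psi t x - t / 2 * entHH x := by
  simp only [entF, psi, entHH, entH_eq_negMulLog, negMulLog_mul]
  ring

theorem psi_zero : psi t 0 = 0 := by simp [psi, entH]

theorem psi_self : psi t t = t / 2 * entHH t := by
  rw [psi, show 1 - (2 - t) * t = (1 - t) * (1 - t) by ring, entH_eq_negMulLog, negMulLog_mul,
    entHH, entH_eq_negMulLog]
  ring

theorem wronskian_self (ht : t < 1) : wronskian t t = 0 := by
  have h1t : 1 - t ≠ 0 := by linarith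
  rw [wronskian, psi_self, psi', show 1 - (2 - t) * t = (1 - t) * (1 - t) by ring,
    log_mul h1t h1t]
  simp only [entHH, entH, entHH']
  ring

theorem wronskianNum_zero : wronskianNum t 0 = 0 := by simp [wronskianNum, psi_zero]

theorem wronskianNum_self_neg (ht : t ∈ Ioo (0 : ℝ) 1) : wronskianNum t t < 0 := by
  have hH := entHH_pos ht.1 ht.2
  have h1t : 0 < 1 - t := by linarith [ht.2]
  have : wronskianNum t t = -(t * (1 - t) * entHH t) := by
    rw [wronskianNum, psi_self]; ring
  rw [this, neg_neg_iff_pos]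
  exact mul_pos (mul_pos ht.1 h1t) hH

theorem continuous_wronskianNum : Continuous (wronskianNum t) := by
  unfold wronskianNum psi entHH; rw [entH_eq_negMulLog]; fun_prop

theorem hasDerivAt_entHH (hx : x ≠ 0) (hx1 : 1 - x ≠ 0) : HasDerivAt entHH (entHH' x) x := by
  have h := (hasDerivAt_negMulLog hx).add
    ((hasDerivAt_negMulLog hx1).comp x ((hasDerivAt_id x).const_sub 1))
  refine h.congr_deriv ?_
  rw [entHH']; ring

theorem hasDerivAt_entHH' (hx : x ≠ 0) (hx1 : 1 - x ≠ 0) :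
    HasDerivAt entHH' (-1 / (x * (1 - x))) x := by
  have h := ((hasDerivAt_id x).const_sub 1).log hx1 |>.sub (hasDerivAt_log hx)
  refine h.congr_deriv ?_
  simp only [id_eq]
  field_simp
  ring

theorem hasDerivAt_psi (hx1 : 1 - x ≠ 0) (hax : 1 - (2 - t) * x ≠ 0) :
    HasDerivAt (psi t) (psi' t x) x := by
  have ha := (hasDerivAt_negMulLog hax).comp x (((hasDerivAt_id x).const_mul (2 - t)).const_sub 1)
  have hb := (hasDerivAt_negMulLog hx1).comp x ((hasDerivAt_id x).const_sub 1)
  have h := (((hasDerivAt_id x).const_mul (entH t / 2 + entH (1 - t))).add (ha.div_const 2)).sub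
    (hb.const_mul ((2 - t) / 2))
  refine h.congr_deriv ?_
  rw [psi']; ring

theorem hasDerivAt_psi' (hx1 : 1 - x ≠ 0) (hax : 1 - (2 - t) * x ≠ 0) :
    HasDerivAt (psi' t) (-(2 - t) * (1 - t) / (2 * (1 - x) * (1 - (2 - t) * x))) x := by
  have ha := (((hasDerivAt_id x).const_mul (2 - t)).const_sub 1).log hax
  have hb := ((hasDerivAt_id x).const_sub 1).log hx1
  have h := ((ha.sub hb).const_mul ((2 - t) / 2)).const_add (entH t / 2 + entH (1 - t))
  refine h.congr_deriv ?_
  simp only [id_eq]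
  field_simp
  ring

theorem hasDerivAt_wronskian (hx : x ≠ 0) (hx1 : 1 - x ≠ 0) (hax : 1 - (2 - t) * x ≠ 0) :
    HasDerivAt (wronskian t) (wronskianNum t x / (2 * x * (1 - x) * (1 - (2 - t) * x))) x := by
  have h := ((hasDerivAt_psi' hx1 hax).mul (hasDerivAt_entHH hx hx1)).sub
    ((hasDerivAt_psi hx1 hax).mul (hasDerivAt_entHH' hx hx1))
  refine h.congr_deriv ?_
  rw [wronskianNum]
  field_simp
  ring

theorem hasDerivAt_wronskianNum (hx : x ≠ 0) (hx1 : 1 - x ≠ 0) (hax : 1 - (2 - t) * x ≠ 0) :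
    HasDerivAt (wronskianNum t) (wronskianNum' t x) x := by
  have hlin := ((hasDerivAt_id x).const_mul (2 - t)).const_sub 1
  have h := (((hasDerivAt_psi hx1 hax).const_mul 2).mul hlin).sub
    (((hasDerivAt_id x).mul (hasDerivAt_entHH hx hx1)).const_mul ((2 - t) * (1 - t)))
  refine h.congr_deriv ?_
  simp only [wronskianNum', id_eq]
  ring

theorem hasDerivAt_wronskianNum' (hx : x ≠ 0) (hx1 : 1 - x ≠ 0) (hax : 1 - (2 - t) * x ≠ 0) :
    HasDerivAt (wronskianNum' t)
      (-4 * (2 - t) * psi' t x - 2 * (2 - t) * (1 - t) * entHH' x) x := by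
  have hlin := ((hasDerivAt_id x).const_mul (2 - t)).const_sub 1
  have h := ((((hasDerivAt_psi' hx1 hax).const_mul 2).mul hlin).sub
    ((hasDerivAt_psi hx1 hax).const_mul (2 * (2 - t)))).sub
    (((hasDerivAt_entHH hx hx1).add ((hasDerivAt_id x).mul
      (hasDerivAt_entHH' hx hx1))).const_mul ((2 - t) * (1 - t)))
  refine h.congr_deriv ?_
  simp only [id_eq]
  field_simp
  ring

theorem domain_of_mem_Ioc (ht : t < 1) (hx : x ∈ Ioc 0 t) :
    x ≠ 0 ∧ 1 - x ≠ 0 ∧ 1 - (2 - t) * x ≠ 0 :=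
  ⟨hx.1.ne', by linarith [hx.2], (one_sub_two_sub_mul_pos ht hx.2).ne'⟩

theorem antitoneOn_entHH' : AntitoneOn entHH' (Ioo 0 1) := by
  intro x hx y hy hxy
  have := log_le_log (by linarith [hy.2]) (by linarith : 1 - y ≤ 1 - x)
  have := log_le_log hx.1 hxy
  simp only [entHH']
  linarith

theorem antitoneOn_psi' (ht : t < 1) : AntitoneOn (psi' t) (Ioo 0 t) := by
  intro x hx y hy hxy
  have hax := one_sub_two_sub_mul_pos ht hx.2.le
  have hay := one_sub_two_sub_mul_pos ht hy.2.le
  have hx1 : 0 < 1 - x := by linarith [hx.2]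
  have hy1 : 0 < 1 - y := by linarith [hy.2]
  -- `(1 - (2 - t) x) / (1 - x) = 1 - (1 - t) x / (1 - x)` decreases in `x`
  have hratio : (1 - (2 - t) * y) / (1 - y) ≤ (1 - (2 - t) * x) / (1 - x) := by
    rw [div_le_div_iff₀ hy1 hx1]
    nlinarith [mul_nonneg (by linarith : (0 : ℝ) ≤ 1 - t) (sub_nonneg.2 hxy)]
  have hlog := log_le_log (div_pos hay hy1) hratio
  rw [log_div hay.ne' hy1.ne', log_div hax.ne' hx1.ne'] at hlog
  simp only [psi']
  nlinarith

theorem convexOn_wronskianNum' (ht : t < 1) : ConvexOn ℝ (Ioo 0 t) (wronskianNum' t) := by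
  have hderiv : ∀ x ∈ Ioo 0 t, HasDerivAt (wronskianNum' t)
      (-4 * (2 - t) * psi' t x - 2 * (2 - t) * (1 - t) * entHH' x) x := fun x hx => by
    obtain ⟨h0, h1, h2⟩ := domain_of_mem_Ioc ht (Ioo_subset_Ioc_self hx)
    exact hasDerivAt_wronskianNum' h0 h1 h2
  refine MonotoneOn.convexOn_of_deriv (convex_Ioo 0 t)
    (fun x hx => (hderiv x hx).continuousAt.continuousWithinAt) ?_ ?_ <;> rw [interior_Ioo]
  · exact fun x hx => (hderiv x hx).differentiableAt.differentiableWithinAt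
  intro x hx y hy hxy
  rw [(hderiv x hx).deriv, (hderiv y hy).deriv]
  have hpsi := antitoneOn_psi' ht hx hy hxy
  have hH := antitoneOn_entHH' ⟨hx.1, hx.2.trans ht⟩ ⟨hy.1, hy.2.trans ht⟩ hxy
  have h2t : 0 ≤ 2 - t := by linarith
  have h1t : 0 ≤ 1 - t := by linarith
  nlinarith [mul_le_mul_of_nonneg_left hpsi h2t,
    mul_le_mul_of_nonneg_left hH (mul_nonneg h2t h1t)]

theorem wronskianNum_neg (ht : t ∈ Ioo (0 : ℝ) 1) {y z : ℝ} (hy : y ∈ Ioo 0 t)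
    (hz : z ∈ Ioo y t) (hVy : wronskianNum t y ≤ 0) : wronskianNum t z < 0 :=
  neg_of_convexOn_deriv continuous_wronskianNum.continuousOn
    (fun x hx => by
      obtain ⟨h0, h1, h2⟩ := domain_of_mem_Ioc ht.2 (Ioo_subset_Ioc_self hx)
      exact hasDerivAt_wronskianNum h0 h1 h2)
    (convexOn_wronskianNum' ht.2) wronskianNum_zero (wronskianNum_self_neg ht) hy.1 hz.1 hz.2 hVy

theorem isBigO_psi : psi t =O[𝓝 0] id := by
  have h := (hasDerivAt_psi (t := t) (x := 0) (by simp) (by simp)).isBigO_sub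
  simp only [psi_zero, sub_zero] at h
  exact h

theorem tendsto_wronskian : Tendsto (wronskian t) (𝓝 0) (𝓝 0) := by
  have hpsi' : ContinuousAt (psi' t) 0 := by
    unfold psi'; fun_prop (disch := norm_num)
  have h1 : Tendsto (fun x => psi' t x * entHH x) (𝓝 0) (𝓝 0) := by
    have h := (hpsi'.mul continuous_entHH.continuousAt).tendsto
    rwa [Pi.mul_apply, show entHH 0 = 0 by simp [entHH, entH], mul_zero] at h
  have hxH' : Tendsto (fun x => x * entHH' x) (𝓝 0) (𝓝 0) := by
    have : ContinuousAt (fun x => x * log (1 - x) - x * log x) 0 := by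
      have := continuous_mul_log.continuousAt (x := 0)
      fun_prop (disch := norm_num)
    simpa [entHH', mul_sub] using this.tendsto
  have h2 : Tendsto (fun x => psi t x * entHH' x) (𝓝 0) (𝓝 0) :=
    (isBigO_psi.mul (isBigO_refl entHH' _)).trans_tendsto hxH'
  have h := h1.sub h2
  rwa [sub_zero] at h

theorem tendsto_id_div_entHH : Tendsto (fun x => x / entHH x) (𝓝[>] 0) (𝓝 0) := by
  have hlog : Tendsto (fun x => -log x) (𝓝[>] 0) atTop :=
    tendsto_neg_atBot_atTop.comp tendsto_log_nhdsGT_zero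
  have hHx : Tendsto (fun x => entHH x / x) (𝓝[>] 0) atTop := by
    refine tendsto_atTop_mono' _ ?_ hlog
    filter_upwards [Ioo_mem_nhdsGT (zero_lt_one' ℝ)] with x hx
    rw [le_div_iff₀ hx.1, entHH, entH]
    nlinarith [entH_pos (by linarith [hx.2] : 0 < 1 - x) (by linarith [hx.1])]
  refine hHx.inv_tendsto_atTop.congr fun x => ?_
  simp only [Pi.inv_apply, inv_div]

theorem tendsto_psi_div_entHH : Tendsto (fun x => psi t x / entHH x) (𝓝[>] 0) (𝓝 0) := by
  have h := tendsto_id_div_entHH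
  simp only [div_eq_mul_inv] at h ⊢
  exact ((isBigO_psi.mono nhdsWithin_le_nhds).mul (isBigO_refl _ _)).trans_tendsto h

theorem wronskian_pos (ht : t ∈ Ioo (0 : ℝ) 1) (hx : x ∈ Ioo 0 t) : 0 < wronskian t x := by
  have hderiv : ∀ y ∈ Ioc 0 t, HasDerivAt (wronskian t)
      (wronskianNum t y / (2 * y * (1 - y) * (1 - (2 - t) * y))) y := fun y hy => by
    obtain ⟨h0, h1, h2⟩ := domain_of_mem_Ioc ht.2 hy
    exact hasDerivAt_wronskian h0 h1 h2
  have hdenom : ∀ y ∈ Ioo 0 t, 0 < 2 * y * (1 - y) * (1 - (2 - t) * y) := fun y hy => by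
    have := one_sub_two_sub_mul_pos ht.2 hy.2.le
    have : 0 < 1 - y := by linarith [hy.2, ht.2]
    have := hy.1
    positivity
  refine pos_of_tendsto_of_deriv_sign (fun y hy => hderiv y (Ioo_subset_Ioc_self hy))
    (fun y hy => (hderiv y hy).continuousAt.continuousWithinAt)
    (tendsto_wronskian.mono_left nhdsWithin_le_nhds) (wronskian_self ht.2) ?_ hx
  intro y hy z hz hVy
  refine div_neg_of_neg_of_pos (wronskianNum_neg ht hy hz ?_) (hdenom z ⟨hy.1.trans hz.1, hz.2⟩)
  exact le_of_not_gt fun hpos => hVy.not_gt (div_pos hpos (hdenom y hy))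

theorem strictMonoOn_psi_div_entHH (ht : t ∈ Ioo (0 : ℝ) 1) :
    StrictMonoOn (fun x => psi t x / entHH x) (Ioc 0 t) := by
  have hderiv : ∀ x ∈ Ioc 0 t,
      HasDerivAt (fun x => psi t x / entHH x) (wronskian t x / entHH x ^ 2) x := fun x hx => by
    obtain ⟨h0, h1, h2⟩ := domain_of_mem_Ioc ht.2 hx
    exact (hasDerivAt_psi h1 h2).div (hasDerivAt_entHH h0 h1)
      (entHH_pos hx.1 (by linarith [hx.2, ht.2])).ne'
  refine strictMonoOn_of_deriv_pos (convex_Ioc 0 t)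
    (fun x hx => (hderiv x hx).continuousAt.continuousWithinAt) ?_
  rw [interior_Ioc]
  intro x hx
  rw [(hderiv x (Ioo_subset_Ioc_self hx)).deriv]
  exact div_pos (wronskian_pos ht hx) (pow_pos (entHH_pos hx.1 (by linarith [hx.2, ht.2])) 2)

theorem entF_div_entHH (hH : entHH x ≠ 0) :
    entF x t / entHH x = psi t x / entHH x - t / 2 := by
  rw [entF_eq, sub_div, mul_div_assoc, div_self hH, mul_one]

end EntropyRatio

open EntropyRatio in
theorem stmt_12 (t : ℝ) (ht : t ∈ Set.Ioo (0 : ℝ) 1) :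
    ContinuousOn (fun x => entF x t / entHH x) (Set.Ioc 0 t) ∧
    StrictMonoOn (fun x => entF x t / entHH x) (Set.Ioc 0 t) ∧
    entF t t / entHH t = 0 ∧
    (fun x => entF x t / entHH x) '' Set.Ioc 0 t = Set.Ioc (-t / 2) 0 := by
  have hH : ∀ x ∈ Ioc 0 t, entHH x ≠ 0 := fun x hx =>
    (entHH_pos hx.1 (by linarith [hx.2, ht.2])).ne'
  have hEq : ∀ x ∈ Ioc 0 t, entF x t / entHH x = psi t x / entHH x - t / 2 :=
    fun x hx => entF_div_entHH (hH x hx)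
  have hcont : ContinuousOn (fun x => entF x t / entHH x) (Ioc 0 t) :=
    ContinuousOn.div (by unfold entF entHH; rw [entH_eq_negMulLog]; fun_prop)
      continuous_entHH.continuousOn hH
  have hmono : StrictMonoOn (fun x => entF x t / entHH x) (Ioc 0 t) := fun x hx y hy hxy => by
    simp only [hEq x hx, hEq y hy]
    exact sub_lt_sub_right (strictMonoOn_psi_div_entHH ht hx hy hxy) _
  have hlim : Tendsto (fun x => entF x t / entHH x) (𝓝[>] 0) (𝓝 (-t / 2)) := by
    rw [neg_div, ← zero_sub]
    refine ((tendsto_psi_div_entHH (t := t)).sub_const (t / 2)).congr' ?_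
    filter_upwards [Ioo_mem_nhdsGT ht.1] with x hx
    exact (hEq x (Ioo_subset_Ioc_self hx)).symm
  have hzero : entF t t / entHH t = 0 := by rw [entF_eq, psi_self, sub_self, zero_div]
  refine ⟨hcont, hmono, hzero, ?_⟩
  rw [hmono.image_Ioc_of_tendsto ht.1 hcont hlim, hzero]
end

section
/- For all real numbers x, t with 0 < x ≤ 0.6 and x ≤ t ≤ 1, one has F(x,t) ≤ (1/2)·x·t·(1 − x/t + log(x/t)) + x²·t − (1/2)·x·t² − (1/6)·x·t³ + (1/4)·(1 − (2−t)³/3)·x³. -/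
/-!
Since `h (a b) = a h(b) + b h(a)`, the `h (x)` terms in `F` combine into `(x t / 2) log (x / t)`,
leaving `F = (x t / 2) log (x / t) + x h(1 - t) + h(1 - (2 - t) x) / 2 - h(1 - x)`.
Each `h (1 - u)` is then bounded by a cubic in `u` from the Taylor series
`-log (1 - u) = ∑ uⁿ / n`: from above by `u - u²/2 - u³/6`, from below by `(1 - u)(u + u²/2 + u³/3)`.
What remains of the claim is the polynomial inequality `0 ≤ x² (t²/4 + x/12 - x²/3)`,
which holds for `0 < x ≤ t ≤ 1`.
-/

open Real Finset

lemma entH_eq_negMulLog : entH = negMulLog := rfl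

lemma entF_eq {x t : ℝ} (hx : x ≠ 0) (ht : t ≠ 0) :
    entF x t = x * t / 2 * log (x / t) + x * negMulLog (1 - t)
      + negMulLog (1 - (2 - t) * x) / 2 - negMulLog (1 - x) := by
  simp only [entF, entHH, entH_eq_negMulLog, negMulLog_mul, log_div hx ht, negMulLog]
  ring

lemma sum_pow_div_le_neg_log_one_sub (n : ℕ) {x : ℝ} (h0 : 0 ≤ x) (h1 : x < 1) :
    ∑ i ∈ range n, x ^ (i + 1) / (i + 1) ≤ -log (1 - x) :=
  sum_le_hasSum (range n) (fun _ _ => by positivity)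
    (hasSum_pow_div_log_of_abs_lt_one (by rwa [abs_of_nonneg h0]))

lemma mul_cubic_le_negMulLog_one_sub {x : ℝ} (h0 : 0 ≤ x) (h1 : x ≤ 1) :
    (1 - x) * (x + x ^ 2 / 2 + x ^ 3 / 3) ≤ negMulLog (1 - x) := by
  rcases h1.eq_or_lt with rfl | h1
  · simp
  have hlog := sum_pow_div_le_neg_log_one_sub 3 h0 h1
  norm_num [sum_range_succ] at hlog
  rw [negMulLog, neg_mul, ← mul_neg]
  exact mul_le_mul_of_nonneg_left (by linarith) (by linarith)

lemma negMulLog_one_sub_le {u : ℝ} (h0 : 0 ≤ u) (h1 : u ≤ 1) :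
    negMulLog (1 - u) ≤ u - u ^ 2 / 2 - u ^ 3 / 6 := by
  let g : ℝ → ℝ := fun u => u - u ^ 2 / 2 - u ^ 3 / 6 - negMulLog (1 - u)
  -- `g' u = -u - u²/2 - log (1 - u)`, which is nonnegative by the series for `-log (1 - u)`.
  have hg : MonotoneOn g (Set.Icc 0 1) := by
    refine monotoneOn_of_hasDerivWithinAt_nonneg (convex_Icc 0 1) (by fun_prop)
      (f' := fun u => -u - u ^ 2 / 2 - log (1 - u)) (fun v hv => ?_) (fun v hv => ?_)
    all_goals rw [interior_Icc] at hv
    · have hlog := (hasDerivAt_negMulLog (sub_ne_zero.mpr hv.2.ne')).comp v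
        ((hasDerivAt_id v).const_sub 1)
      have hpoly := (((hasDerivAt_id v).sub ((hasDerivAt_pow 2 v).div_const 2)).sub
        ((hasDerivAt_pow 3 v).div_const 6))
      refine HasDerivAt.hasDerivWithinAt ((hpoly.sub hlog).congr_deriv ?_)
      norm_num
      ring
    · have hlog := sum_pow_div_le_neg_log_one_sub 2 hv.1.le hv.2
      norm_num [sum_range_succ] at hlog
      linarith
  have := hg ⟨le_rfl, zero_le_one⟩ ⟨h0, h1⟩ h0
  simp only [g] at this
  norm_num at this
  linarith

theorem stmt_17_general (x t : ℝ) (hx : 0 < x) (hxt : x ≤ t) (ht : t ≤ 1) :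
    entF x t ≤ (1 / 2) * x * t * (1 - x / t + Real.log (x / t))
      + x ^ 2 * t - (1 / 2) * x * t ^ 2 - (1 / 6) * x * t ^ 3
      + (1 / 4) * (1 - (2 - t) ^ 3 / 3) * x ^ 3 := by
  have ht0 : 0 < t := hx.trans_le hxt
  have hu0 : 0 ≤ (2 - t) * x := mul_nonneg (by linarith) hx.le
  have hu1 : (2 - t) * x ≤ 1 := by nlinarith [sq_nonneg (1 - x)]
  have hT := negMulLog_one_sub_le ht0.le ht
  have hU := negMulLog_one_sub_le hu0 hu1
  have hX := mul_cubic_le_negMulLog_one_sub hx.le (hxt.trans ht)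
  have hdiv : x * t * (x / t) = x ^ 2 := by field_simp
  have hpoly : 0 ≤ x ^ 2 * (t ^ 2 / 4 + x / 12 - x ^ 2 / 3) := by
    have hxt2 : x ^ 2 ≤ t ^ 2 := pow_le_pow_left₀ hx.le hxt 2
    have hx2 : x ^ 2 ≤ x := by nlinarith
    exact mul_nonneg (sq_nonneg x) (by linarith)
  rw [entF_eq hx.ne' ht0.ne']
  linear_combination x * hT + hU / 2 + hX + hpoly + hdiv / 2

theorem stmt_17 (x t : ℝ) (hx : 0 < x) (hx6 : x ≤ 0.6) (hxt : x ≤ t) (ht : t ≤ 1) :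
    entF x t ≤ (1 / 2) * x * t * (1 - x / t + Real.log (x / t))
      + x ^ 2 * t - (1 / 2) * x * t ^ 2 - (1 / 6) * x * t ^ 3
      + (1 / 4) * (1 - (2 - t) ^ 3 / 3) * x ^ 3 :=
  stmt_17_general x t hx hxt ht
end
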